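/- arXiv:2212.01024 — 6 statements merged into one kernel-verified Lean document; each statement's English description precedes it below -/
import Mathlib

section
/- If a language L over a finite alphabet satisfies a local order condition, then L contains no locally strong bispecial word; that is, for every bispecial word w and all nonempty subsets A' of A(w) and D' of D(w), the number of pairs (a,b) with a in A', b in D', and awb in L is at most #A' + #D' - 1. -/
open List Set

variable {A : Type*}

/-- A (factorial, extendable) language over an alphabet `A`. -/
def IsLanguage (L : Set (List A)) : Prop :=
  (∀ w ∈ L, ∀ v : List A, v <:+: w → v ∈ L) ∧
  (∀ w ∈ L, ∃ a : A, a :: w ∈ L) ∧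
  (∀ w ∈ L, ∃ a : A, w ++ [a] ∈ L)

/-- Arrival set `A(w)`. -/
def arrSet (L : Set (List A)) (w : List A) : Set A := {a | a :: w ∈ L}

/-- Departure set `D(w)`. -/
def depSet (L : Set (List A)) (w : List A) : Set A := {a | w ++ [a] ∈ L}

def Bispecial (L : Set (List A)) (w : List A) : Prop :=
  1 < (arrSet L w).ncard ∧ 1 < (depSet L w).ncard

/-- `m(w) = #{awb ∈ L}`. -/
noncomputable def extCount (L : Set (List A)) (w : List A) : ℕ :=
  {p : A × A | p.1 :: (w ++ [p.2]) ∈ L}.ncard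

def StrongBispecial (L : Set (List A)) (w : List A) : Prop :=
  Bispecial L w ∧ (arrSet L w).ncard + (depSet L w).ncard - 1 < extCount L w

def WeakBispecial (L : Set (List A)) (w : List A) : Prop :=
  Bispecial L w ∧ extCount L w < (arrSet L w).ncard + (depSet L w).ncard - 1

def LocallyStrongBispecial (L : Set (List A)) (w : List A) : Prop :=
  Bispecial L w ∧ ∃ A' D' : Set A, A'.Nonempty ∧ D'.Nonempty ∧
    A' ⊆ arrSet L w ∧ D' ⊆ depSet L w ∧
    A'.ncard + D'.ncard - 1 <
      {p : A × A | p.1 ∈ A' ∧ p.2 ∈ D' ∧ p.1 :: (w ++ [p.2]) ∈ L}.ncard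

/-- The order condition at a single bispecial word, for orders `rA`, `rD`. -/
def OrderConditionAt (L : Set (List A)) (w : List A) (rA rD : A → A → Prop) : Prop :=
  ∀ a b c d : A, a ≠ b → c ≠ d →
    a :: (w ++ [c]) ∈ L → b :: (w ++ [d]) ∈ L → (rA a b ↔ rD c d)

/-- The local order condition. -/
def LocalOrderCondition (L : Set (List A)) : Prop :=
  ∀ w : List A, Bispecial L w → ∃ rA rD : A → A → Prop,
    IsStrictTotalOrder A rA ∧ IsStrictTotalOrder A rD ∧ OrderConditionAt L w rA rD

/-- `a` and `a'` are consecutive in the strict order `r`. -/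
def ConsecutiveIn (r : A → A → Prop) (a a' : A) : Prop :=
  r a a' ∧ ∀ c : A, ¬ (r a c ∧ r c a')

/-- A connection for the bispecial word `w`, with respect to orders `rA`, `rD`. -/
def ConnectionWith (L : Set (List A)) (w : List A) (rA rD : A → A → Prop) : Prop :=
  ∃ a a' b b' : A, ConsecutiveIn rA a a' ∧ ConsecutiveIn rD b b' ∧
    a :: (w ++ [b]) ∈ L ∧ a' :: (w ++ [b']) ∈ L ∧
    a :: (w ++ [b']) ∉ L ∧ a' :: (w ++ [b]) ∉ L

/-- `w` has a connection (for some orders realizing the order condition at `w`). -/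
def HasConnection (L : Set (List A)) (w : List A) : Prop :=
  ∃ rA rD : A → A → Prop, IsStrictTotalOrder A rA ∧ IsStrictTotalOrder A rD ∧
    OrderConditionAt L w rA rD ∧ ConnectionWith L w rA rD

/-- Complexity function `p(n)`. -/
noncomputable def complexityFn (L : Set (List A)) (n : ℕ) : ℕ :=
  {w ∈ L | w.length = n}.ncard

def UniformlyRecurrent (L : Set (List A)) : Prop :=
  ∀ v ∈ L, ∃ n : ℕ, ∀ u ∈ L, u.length = n → v <:+: u

def LangRecurrent (L : Set (List A)) : Prop :=
  ∀ v ∈ L, ∃ u : List A, u ≠ [] ∧ v ++ u ∈ L ∧ v <:+ v ++ u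

def LangAperiodic (L : Set (List A)) : Prop :=
  ∀ w ∈ L, w ≠ [] → ∃ n : ℕ, (List.replicate n w).flatten ∉ L

def LeftSpecial (L : Set (List A)) (w : List A) : Prop := 1 < (arrSet L w).ncard

def RightSpecial (L : Set (List A)) (w : List A) : Prop := 1 < (depSet L w).ncard

/-- The two-sided subshift associated to `L`. -/
def XL (L : Set (List A)) : Set (ℤ → A) :=
  {x | ∀ (m : ℤ) (n : ℕ), (List.ofFn fun i : Fin n => x (m + (i : ℕ))) ∈ L}

def occursAtZ (x : ℤ → A) (m : ℤ) (w : List A) : Prop :=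
  (List.ofFn fun i : Fin w.length => x (m + (i : ℕ))) = w

def FactorsZ (x : ℤ → A) : Set (List A) := {w | ∃ m : ℤ, occursAtZ x m w}

def RightRec (x : ℤ → A) : Prop :=
  ∀ w ∈ FactorsZ x, ∀ N : ℤ, ∃ m : ℤ, N ≤ m ∧ occursAtZ x m w

def LeftRec (x : ℤ → A) : Prop :=
  ∀ w ∈ FactorsZ x, ∀ N : ℤ, ∃ m : ℤ, m ≤ N ∧ occursAtZ x m w

def RecurrentZ (x : ℤ → A) : Prop := RightRec x ∧ LeftRec x

/-- The `F`-flipped order condition, with orders `rA` (arrival) and `rD` (departure):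
the departure order is reversed when the number of `F`-letters of `w` is odd. -/
def FlippedOC [DecidableEq A] (L : Set (List A)) (F : Finset A)
    (rA rD : A → A → Prop) : Prop :=
  ∀ w : List A, Bispecial L w → ∀ a b c d : A, a ≠ b → c ≠ d →
    a :: (w ++ [c]) ∈ L → b :: (w ++ [d]) ∈ L →
    (rA a b ↔ if Even (w.countP fun e => decide (e ∈ F)) then rD c d else rD d c)

/-- A generalized `F`-flipped interval exchange transformation. -/
structure GIET (A : Type*) (F : Finset A) where
  l : A → ℝ
  r : A → ℝ
  T : ℝ → ℝ
  lt : ∀ e, l e < r e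
  sub : ∀ e, Set.Ioo (l e) (r e) ⊆ Set.Ioo (0 : ℝ) 1
  disj : ∀ e f, e ≠ f → Disjoint (Set.Ioo (l e) (r e)) (Set.Ioo (l f) (r f))
  cover : Set.Icc (0 : ℝ) 1 = ⋃ e, Set.Icc (l e) (r e)
  cont : ∀ e, ContinuousOn T (Set.Ioo (l e) (r e))
  inc : ∀ e ∉ F, StrictMonoOn T (Set.Ioo (l e) (r e))
  dec : ∀ e ∈ F, StrictAntiOn T (Set.Ioo (l e) (r e))
  l' : A → ℝ
  r' : A → ℝ
  lt' : ∀ e, l' e < r' e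
  img : ∀ e, T '' Set.Ioo (l e) (r e) = Set.Ioo (l' e) (r' e)
  disj' : ∀ e f, e ≠ f → Disjoint (Set.Ioo (l' e) (r' e)) (Set.Ioo (l' f) (r' f))
  cover' : Set.Icc (0 : ℝ) 1 = ⋃ e, Set.Icc (l' e) (r' e)

variable {F : Finset A}

/-- A bi-infinite orbit of `G`, with symbolic itinerary `u`. -/
def GIET.IsOrbit (G : GIET A F) (u : ℤ → A) (p : ℤ → ℝ) : Prop :=
  (∀ n : ℤ, G.T (p n) = p (n + 1)) ∧
  ∀ n : ℤ, p n ∈ Set.Ioo (G.l (u n)) (G.r (u n))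

/-- The natural coding `L(T)`: the language generated by all trajectories. -/
def GIET.lang (G : GIET A F) : Set (List A) :=
  {w | ∃ (u : ℤ → A) (p : ℤ → ℝ), G.IsOrbit u p ∧
    ∃ m : ℤ, (List.ofFn fun i : Fin w.length => u (m + (i : ℕ))) = w}

section OrderRank

variable {α β : Type*}

noncomputable def orderRank (r : α → α → Prop) (s : Set α) (a : α) : ℕ :=
  (s ∩ {x | r x a}).ncard

variable {r : α → α → Prop} {s : Set α} {a b : α}

lemma orderRank_le_orderRank [IsTrans α r] (hs : s.Finite) (hab : r a b) :
    orderRank r s a ≤ orderRank r s b :=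
  Set.ncard_le_ncard (fun _ hx => ⟨hx.1, _root_.trans hx.2 hab⟩) (hs.subset inter_subset_left)

lemma orderRank_lt_orderRank [IsTrans α r] [Std.Irrefl r] (hs : s.Finite) (ha : a ∈ s)
    (hab : r a b) : orderRank r s a < orderRank r s b := by
  refine Set.ncard_lt_ncard ⟨fun _ hx => ⟨hx.1, _root_.trans hx.2 hab⟩, fun hsub => ?_⟩
    (hs.subset inter_subset_left)
  exact irrefl a (hsub ⟨ha, hab⟩).2

lemma orderRank_le_ncard_sub_one [Std.Irrefl r] (hs : s.Finite) (ha : a ∈ s) :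
    orderRank r s a ≤ s.ncard - 1 := by
  have hsub : s ∩ {x | r x a} ⊆ s \ {a} := fun x hx =>
    ⟨hx.1, fun hxa => irrefl a ((Set.mem_singleton_iff.1 hxa) ▸ hx.2)⟩
  calc orderRank r s a ≤ (s \ {a}).ncard := Set.ncard_le_ncard hsub hs.sdiff
    _ = s.ncard - 1 := Set.ncard_sdiff_singleton_of_mem ha

variable {rA : α → α → Prop} {rD : β → β → Prop} {X : Set α} {Y : Set β} {E : Set (α × β)}

def OrderCompatible (rA : α → α → Prop) (rD : β → β → Prop) (E : Set (α × β)) : Prop :=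
  ∀ p ∈ E, ∀ q ∈ E, p.1 ≠ q.1 → p.2 ≠ q.2 → (rA p.1 q.1 ↔ rD p.2 q.2)

lemma OrderCompatible.orderRank_add_lt_of_fst [IsStrictOrder α rA] [IsTrans β rD]
    (hE : OrderCompatible rA rD E) (hX : X.Finite) (hY : Y.Finite) (hEXY : E ⊆ X ×ˢ Y)
    {p q : α × β} (hp : p ∈ E) (hq : q ∈ E) (hpq : rA p.1 q.1) :
    orderRank rA X p.1 + orderRank rD Y p.2 < orderRank rA X q.1 + orderRank rD Y q.2 := by
  have hfst := orderRank_lt_orderRank hX (hEXY hp).1 hpq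
  by_cases hsnd : p.2 = q.2
  · rw [hsnd]
    omega
  · have hne : p.1 ≠ q.1 := fun h => irrefl q.1 (h ▸ hpq)
    have := orderRank_le_orderRank hY ((hE p hp q hq hne hsnd).1 hpq)
    omega

lemma OrderCompatible.injOn_orderRank_add [IsStrictTotalOrder α rA] [IsStrictTotalOrder β rD]
    (hE : OrderCompatible rA rD E)
    (hX : X.Finite) (hY : Y.Finite) (hEXY : E ⊆ X ×ˢ Y) :
    InjOn (fun p => orderRank rA X p.1 + orderRank rD Y p.2) E := by
  intro p hp q hq hpq
  rcases trichotomous_of rA p.1 q.1 with h1 | h1 | h1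
  · exact absurd hpq (hE.orderRank_add_lt_of_fst hX hY hEXY hp hq h1).ne
  · rcases trichotomous_of rD p.2 q.2 with h2 | h2 | h2
    · have := orderRank_lt_orderRank hY (hEXY hp).2 h2
      simp only [h1] at hpq
      omega
    · exact Prod.ext h1 h2
    · have := orderRank_lt_orderRank hY (hEXY hq).2 h2
      simp only [h1] at hpq
      omega
  · exact absurd hpq (hE.orderRank_add_lt_of_fst hX hY hEXY hq hp h1).ne'

/-- An order-compatible `E` is a chain for the product order, so the sum of the ranks of the
two coordinates is injective on it, with values below `#X + #Y - 1`. -/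
theorem OrderCompatible.ncard_le_ncard_add_ncard_sub_one [IsStrictTotalOrder α rA]
    [IsStrictTotalOrder β rD] (hE : OrderCompatible rA rD E)
    (hX : X.Finite) (hY : Y.Finite) (hEXY : E ⊆ X ×ˢ Y) :
    E.ncard ≤ X.ncard + Y.ncard - 1 := by
  have hmaps : ∀ p ∈ E, orderRank rA X p.1 + orderRank rD Y p.2 ∈
      Iio (X.ncard + Y.ncard - 1) := by
    intro p hp
    have hX1 := orderRank_le_ncard_sub_one (r := rA) hX (hEXY hp).1
    have hY1 := orderRank_le_ncard_sub_one (r := rD) hY (hEXY hp).2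
    have := (Set.ncard_pos hX).2 ⟨_, (hEXY hp).1⟩
    have := (Set.ncard_pos hY).2 ⟨_, (hEXY hp).2⟩
    rw [Set.mem_Iio]
    omega
  simpa using Set.ncard_le_ncard_of_injOn _ hmaps (hE.injOn_orderRank_add hX hY hEXY)

end OrderRank

theorem stmt0_general [Fintype A] (L : Set (List A))
    (hord : LocalOrderCondition L) :
    ∀ w : List A, Bispecial L w →
      ∀ A' D' : Set A, A'.Nonempty → D'.Nonempty →
        A' ⊆ arrSet L w → D' ⊆ depSet L w →
        {p : A × A | p.1 ∈ A' ∧ p.2 ∈ D' ∧ p.1 :: (w ++ [p.2]) ∈ L}.ncard ≤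
          A'.ncard + D'.ncard - 1 := by
  intro w hw A' D' _ _ _ _
  obtain ⟨rA, rD, _, _, hoc⟩ := hord w hw
  have hcompat : OrderCompatible rA rD
      {p : A × A | p.1 ∈ A' ∧ p.2 ∈ D' ∧ p.1 :: (w ++ [p.2]) ∈ L} :=
    fun p hp q hq h1 h2 => hoc p.1 q.1 p.2 q.2 h1 h2 hp.2.2 hq.2.2
  exact hcompat.ncard_le_ncard_add_ncard_sub_one A'.toFinite D'.toFinite
    fun p hp => ⟨hp.1, hp.2.1⟩

/-- a language satisfying a local order condition contains no
locally strong bispecial word. -/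
theorem stmt0 [Fintype A] (L : Set (List A)) (hL : IsLanguage L)
    (hord : LocalOrderCondition L) :
    ∀ w : List A, Bispecial L w →
      ∀ A' D' : Set A, A'.Nonempty → D'.Nonempty →
        A' ⊆ arrSet L w → D' ⊆ depSet L w →
        {p : A × A | p.1 ∈ A' ∧ p.2 ∈ D' ∧ p.1 :: (w ++ [p.2]) ∈ L}.ncard ≤
          A'.ncard + D'.ncard - 1 :=
  stmt0_general L hord
end

section
/- If a language L has no strong bispecial word, then L has only finitely many weak bispecial words. -/
open List Set

variable {A : Type*}

variable {F : Finset A}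

/-!
Let `s n = p (n + 1) - p n`; since every word of `L` extends to the right, `s n ≥ 0`. Its
increment `s (n + 1) - s n` is the sum of the bilateral orders `m(w) - #A(w) - #D(w) + 1` over
the words of length `n`; these are `≤ 0` when there is no strong bispecial word, and `< 0` at a
weak bispecial word. So `s` is an antitone sequence of naturals that drops at every length
carrying a weak bispecial word; it is eventually constant, hence weak bispecial words have bounded
length.
-/

theorem Set.ncard_setOf_fst_mem_snd_mem {ι α : Type*} [Finite α] (s : Finset ι)
    (E : ι → Set α) :
    {p : ι × α | p.1 ∈ s ∧ p.2 ∈ E p.1}.ncard = ∑ i ∈ s, (E i).ncard := by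
  classical
  induction s using Finset.induction_on with
  | empty => simp
  | insert i s hi ih =>
    have hsplit : {p : ι × α | p.1 ∈ insert i s ∧ p.2 ∈ E p.1} =
        Prod.mk i '' E i ∪ {p | p.1 ∈ s ∧ p.2 ∈ E p.1} := by
      ext ⟨j, x⟩
      by_cases hj : j = i <;> simp [hj, hi, Ne.symm]
    have hfin : {p : ι × α | p.1 ∈ s ∧ p.2 ∈ E p.1}.Finite :=
      (s.finite_toSet.prod Set.finite_univ).subset fun p hp => ⟨hp.1, trivial⟩
    rw [hsplit, Set.ncard_union_eq (Set.disjoint_left.2 ?_) (Set.toFinite _) hfin,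
      Set.ncard_image_of_injective _ (Prod.mk_right_injective i), ih, Finset.sum_insert hi]
    rintro _ ⟨x, -, rfl⟩ ⟨hi', -⟩
    exact hi hi'

theorem Set.ncard_image_setOf_fst_mem_snd_mem {ι α β : Type*} [Finite α] {g : ι × α → β}
    (hg : Function.Injective g) (s : Finset ι) (E : ι → Set α) :
    (g '' {p : ι × α | p.1 ∈ s ∧ p.2 ∈ E p.1}).ncard = ∑ i ∈ s, (E i).ncard := by
  rw [Set.ncard_image_of_injective _ hg, Set.ncard_setOf_fst_mem_snd_mem]

theorem Antitone.finite_setOf_lt_succ {s : ℕ → ℕ} (hs : Antitone s) :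
    {n | s (n + 1) < s n}.Finite := by
  exact (Set.finite_lt_nat (Function.argmin s)).subset fun n (hn : s (n + 1) < s n) =>
    lt_of_not_ge fun hle => (Function.argmin_le s (n + 1)).not_gt (hn.trans_le (hs hle))

variable {L : Set (List A)} {w : List A} {a b : A}

namespace IsLanguage

variable (hL : IsLanguage L)
include hL

theorem mem_of_cons_mem (h : a :: w ∈ L) : w ∈ L :=
  hL.1 _ h _ (w.suffix_cons a).isInfix

theorem mem_of_append_singleton_mem (h : w ++ [b] ∈ L) : w ∈ L :=
  hL.1 _ h _ (w.prefix_append [b]).isInfix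

theorem mem_arrSet_of_cons_append_mem (h : a :: (w ++ [b]) ∈ L) : a ∈ arrSet L w :=
  hL.mem_of_append_singleton_mem (b := b) h

theorem mem_depSet_of_cons_append_mem (h : a :: (w ++ [b]) ∈ L) : b ∈ depSet L w :=
  hL.mem_of_cons_mem h

theorem mem_of_weakBispecial (h : WeakBispecial L w) : w ∈ L := by
  obtain ⟨a, ha⟩ := Set.nonempty_of_ncard_ne_zero (s := arrSet L w) (by have := h.1.1; omega)
  exact hL.mem_of_cons_mem ha

variable [Finite A]

theorem one_le_ncard_arrSet (hw : w ∈ L) : 1 ≤ (arrSet L w).ncard :=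
  (Set.ncard_pos).2 (hL.2.1 w hw)

theorem one_le_ncard_depSet (hw : w ∈ L) : 1 ≤ (depSet L w).ncard :=
  (Set.ncard_pos).2 (hL.2.2 w hw)

theorem extCount_le_mul : extCount L w ≤ (arrSet L w).ncard * (depSet L w).ncard := by
  rw [extCount, ← Set.ncard_prod]
  exact Set.ncard_le_ncard (fun p hp =>
    ⟨hL.mem_arrSet_of_cons_append_mem hp, hL.mem_depSet_of_cons_append_mem hp⟩)

end IsLanguage

noncomputable def bilateralOrder (L : Set (List A)) (w : List A) : ℤ :=
  extCount L w - (arrSet L w).ncard - (depSet L w).ncard + 1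

theorem bilateralOrder_nonpos [Finite A] (hL : IsLanguage L) (hw : w ∈ L)
    (hns : ¬ StrongBispecial L w) : bilateralOrder L w ≤ 0 := by
  have hA := hL.one_le_ncard_arrSet hw
  have hD := hL.one_le_ncard_depSet hw
  have hm := hL.extCount_le_mul (w := w)
  unfold bilateralOrder
  by_cases hbis : Bispecial L w
  · have := not_lt.1 fun h => hns ⟨hbis, h⟩
    omega
  · obtain hA1 | hD1 : (arrSet L w).ncard = 1 ∨ (depSet L w).ncard = 1 := by
      unfold Bispecial at hbis; omega
    · rw [hA1] at hm ⊢; omega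
    · rw [hD1] at hm ⊢; omega

theorem WeakBispecial.bilateralOrder_neg (h : WeakBispecial L w) : bilateralOrder L w < 0 := by
  have := h.2
  unfold bilateralOrder
  omega

section Complexity

variable [Finite A]

theorem finite_setOf_mem_length_eq (L : Set (List A)) (n : ℕ) :
    {w ∈ L | w.length = n}.Finite :=
  (List.finite_length_eq A n).subset fun _ hw => hw.2

noncomputable def words (L : Set (List A)) (n : ℕ) : Finset (List A) :=
  (finite_setOf_mem_length_eq L n).toFinset

theorem mem_words {n : ℕ} : w ∈ words L n ↔ w ∈ L ∧ w.length = n := by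
  simp [words]

theorem complexityFn_eq_card_words (n : ℕ) : complexityFn L n = (words L n).card := by
  rw [complexityFn, Set.ncard_eq_toFinset_card _ (finite_setOf_mem_length_eq L n)]
  rfl

theorem complexityFn_succ_eq_sum_ncard_depSet (hL : IsLanguage L) (n : ℕ) :
    complexityFn L (n + 1) = ∑ w ∈ words L n, (depSet L w).ncard := by
  have hg : Function.Injective fun p : List A × A => p.1 ++ [p.2] := fun p q h => by
    obtain ⟨h1, h2⟩ := List.append_inj' h rfl
    exact Prod.ext h1 (List.singleton_injective h2)
  rw [complexityFn, ← Set.ncard_image_setOf_fst_mem_snd_mem hg]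
  congr 1
  ext u
  constructor
  · rintro ⟨hu, hlen⟩
    rcases u.eq_nil_or_concat' with rfl | ⟨v, b, rfl⟩
    · simp at hlen
    · refine ⟨(v, b), ⟨mem_words.2 ⟨?_, by simpa using hlen⟩, hu⟩, rfl⟩
      exact hL.mem_of_append_singleton_mem hu
  · rintro ⟨⟨v, b⟩, ⟨hv, hb⟩, rfl⟩
    exact ⟨hb, by simp [(mem_words.1 hv).2]⟩

theorem complexityFn_succ_eq_sum_ncard_arrSet (hL : IsLanguage L) (n : ℕ) :
    complexityFn L (n + 1) = ∑ w ∈ words L n, (arrSet L w).ncard := by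
  have hg : Function.Injective fun p : List A × A => p.2 :: p.1 := fun p q h => by
    obtain ⟨h1, h2⟩ := List.cons.inj h
    exact Prod.ext h2 h1
  rw [complexityFn, ← Set.ncard_image_setOf_fst_mem_snd_mem hg]
  congr 1
  ext u
  constructor
  · rintro ⟨hu, hlen⟩
    obtain ⟨a, v, rfl⟩ := List.exists_cons_of_length_eq_add_one hlen
    exact ⟨(v, a), ⟨mem_words.2 ⟨hL.mem_of_cons_mem hu, by simpa using hlen⟩, hu⟩, rfl⟩
  · rintro ⟨⟨v, a⟩, ⟨hv, ha⟩, rfl⟩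
    exact ⟨ha, by simp [(mem_words.1 hv).2]⟩

theorem complexityFn_add_two_eq_sum_extCount (hL : IsLanguage L) (n : ℕ) :
    complexityFn L (n + 2) = ∑ w ∈ words L n, extCount L w := by
  have hg : Function.Injective fun p : List A × (A × A) => p.2.1 :: (p.1 ++ [p.2.2]) :=
    fun p q h => by
      obtain ⟨h1, h2⟩ := List.cons.inj h
      obtain ⟨h3, h4⟩ := List.append_inj' h2 rfl
      exact Prod.ext h3 (Prod.ext h1 (List.singleton_injective h4))
  simp only [extCount]
  rw [complexityFn, ← Set.ncard_image_setOf_fst_mem_snd_mem hg]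
  congr 1
  ext u
  constructor
  · rintro ⟨hu, hlen⟩
    obtain ⟨a, t, rfl⟩ := List.exists_cons_of_length_eq_add_one hlen
    rcases t.eq_nil_or_concat' with rfl | ⟨v, b, rfl⟩
    · simp at hlen
    · refine ⟨(v, a, b), ⟨mem_words.2 ⟨?_, by simpa using hlen⟩, hu⟩, rfl⟩
      exact hL.mem_of_append_singleton_mem (hL.mem_depSet_of_cons_append_mem hu)
  · rintro ⟨⟨v, a, b⟩, ⟨hv, hab⟩, rfl⟩
    exact ⟨hab, by simp [(mem_words.1 hv).2]⟩

theorem complexityFn_le_succ (hL : IsLanguage L) (n : ℕ) :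
    complexityFn L n ≤ complexityFn L (n + 1) := by
  rw [complexityFn_succ_eq_sum_ncard_depSet hL, complexityFn_eq_card_words,
    Finset.card_eq_sum_ones]
  exact Finset.sum_le_sum fun w hw => hL.one_le_ncard_depSet (mem_words.1 hw).1

theorem complexityFn_second_difference (hL : IsLanguage L) (n : ℕ) :
    (complexityFn L (n + 2) : ℤ) - 2 * complexityFn L (n + 1) + complexityFn L n =
      ∑ w ∈ words L n, bilateralOrder L w := by
  rw [complexityFn_add_two_eq_sum_extCount hL, two_mul]
  nth_rewrite 1 [complexityFn_succ_eq_sum_ncard_arrSet hL]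
  rw [complexityFn_succ_eq_sum_ncard_depSet hL, complexityFn_eq_card_words]
  simp only [bilateralOrder, Nat.cast_sum, Finset.sum_add_distrib, Finset.sum_sub_distrib,
    Finset.sum_const, nsmul_eq_mul, mul_one]
  ring

end Complexity

/-- a language with no strong bispecial word has only finitely
many weak bispecial words. -/
theorem stmt1 [Fintype A] (L : Set (List A)) (hL : IsLanguage L)
    (hns : ∀ w : List A, ¬ StrongBispecial L w) :
    {w : List A | WeakBispecial L w}.Finite := by
  set s : ℕ → ℕ := fun n => complexityFn L (n + 1) - complexityFn L n
  have hstep (n : ℕ) : (s (n + 1) : ℤ) - s n = ∑ w ∈ words L n, bilateralOrder L w := by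
    simp only [s, Nat.cast_sub (complexityFn_le_succ hL _)]
    linarith [complexityFn_second_difference hL n]
  have hterm_nonpos (n : ℕ) : ∀ w ∈ words L n, bilateralOrder L w ≤ 0 :=
    fun w hw => bilateralOrder_nonpos hL (mem_words.1 hw).1 (hns w)
  have hanti : Antitone s := antitone_nat_of_succ_le fun n => by
    have := hstep n
    have := Finset.sum_nonpos (hterm_nonpos n)
    omega
  have hdrop (w : List A) (hw : WeakBispecial L w) : s (w.length + 1) < s w.length := by
    have hneg : ∑ v ∈ words L w.length, bilateralOrder L v < 0 :=
      Finset.sum_neg' (hterm_nonpos _)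
        ⟨w, mem_words.2 ⟨hL.mem_of_weakBispecial hw, rfl⟩, hw.bilateralOrder_neg⟩
    have := hstep w.length
    omega
  exact (hanti.finite_setOf_lt_succ.biUnion fun n _ => List.finite_length_eq A n).subset
    fun w hw => Set.mem_biUnion (hdrop w hw) rfl
end

section
/- If a language L has no strong bispecial word, then there is a finite set of one-sided infinite sequences (right-infinite sequences whose factors all lie in L) such that every left special word of L is a prefix of one of them; symmetrically, the right special words are suffixes of finitely many left-infinite sequences. -/
open List Set

variable {A : Type*}

variable {F : Finset A}

/-- A right-infinite sequence all of whose factors lie in `L`. -/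
def RInf (L : Set (List A)) (x : ℕ → A) : Prop :=
  ∀ m n : ℕ, (List.ofFn fun i : Fin n => x (m + (i : ℕ))) ∈ L

/-- A left-infinite sequence (`y k` is the letter at position `-(k+1)`) all of
whose factors lie in `L`. -/
def LInf (L : Set (List A)) (y : ℕ → A) : Prop :=
  ∀ m n : ℕ, (List.ofFn fun i : Fin n => y (m + (n - 1 - (i : ℕ)))) ∈ L


/-! Suppose `L` has no strong bispecial word. If a left special word `v` has two left special
extensions `va`, `vb` with `a ≠ b`, then every left special extension `vc` has strictly fewer left
extensions than `v`: otherwise `#A(vc) = #A(v)`, and counting the words `xvy ∈ L` gives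
`m(v) ≥ #A(v) + #A(vd) + (#D(v) - 2) ≥ #A(v) + #D(v)` for the other fork `d`, making `v` strong.
Hence, by induction on `#A(w)`, the left special words extending `w` are, up to the first fork
above `w`, a chain, and beyond it they fall into finitely many subtrees with smaller arrival sets.
A chain of words of `L` lies on one right-infinite sequence of `L`, by extending letter by letter.
Right special words are left special words of the reversed language. -/

lemma IsLanguage.mem_of_infix {L : Set (List A)} (hL : IsLanguage L) {v w : List A}
    (hw : w ∈ L) (h : v <:+: w) : v ∈ L :=
  hL.1 w hw v h

lemma arrSet_subset_of_prefix {L : Set (List A)} (hL : IsLanguage L) {u v : List A}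
    (h : u <+: v) : arrSet L v ⊆ arrSet L u := fun _ ha =>
  hL.mem_of_infix ha (List.cons_prefix_cons.mpr ⟨rfl, h⟩).isInfix

lemma ncard_arrSet_pos [Finite A] {L : Set (List A)} (hL : IsLanguage L) {w : List A}
    (hw : w ∈ L) : 0 < (arrSet L w).ncard :=
  (Set.ncard_pos (Set.toFinite _)).mpr (hL.2.1 w hw)

lemma LeftSpecial.mem {L : Set (List A)} (hL : IsLanguage L) {w : List A}
    (h : LeftSpecial L w) : w ∈ L := by
  obtain ⟨a, ha⟩ := Set.nonempty_of_ncard_ne_zero (s := arrSet L w)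
    (by unfold LeftSpecial at h; omega)
  exact hL.mem_of_infix ha (List.suffix_cons a w).isInfix

lemma LeftSpecial.of_prefix [Finite A] {L : Set (List A)} (hL : IsLanguage L) {u v : List A}
    (h : u <+: v) (hv : LeftSpecial L v) : LeftSpecial L u :=
  hv.trans_le (Set.ncard_le_ncard (arrSet_subset_of_prefix hL h) (Set.toFinite _))

lemma extCount_eq_sum [Fintype A] (L : Set (List A)) (w : List A) :
    extCount L w = ∑ b, (arrSet L (w ++ [b])).ncard := by
  classical
  simp only [extCount, arrSet, Set.ncard_eq_toFinset_card', Set.toFinset_ofPred,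
    Finset.card_filter, Fintype.sum_prod_type_right]

def IsLeftSpecialFork (L : Set (List A)) (v : List A) : Prop :=
  ∃ a b, a ≠ b ∧ LeftSpecial L (v ++ [a]) ∧ LeftSpecial L (v ++ [b])

lemma ncard_arrSet_append_lt [Finite A] {L : Set (List A)} (hL : IsLanguage L)
    {v : List A} (hv : ¬ StrongBispecial L v) {c d : A} (hcd : c ≠ d)
    (hc : LeftSpecial L (v ++ [c])) (hd : LeftSpecial L (v ++ [d])) :
    (arrSet L (v ++ [c])).ncard < (arrSet L v).ncard := by
  classical
  have := Fintype.ofFinite A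
  by_contra hle
  have heq : (arrSet L (v ++ [c])).ncard = (arrSet L v).ncard :=
    le_antisymm (Set.ncard_le_ncard (arrSet_subset_of_prefix hL (List.prefix_append _ _))
      (Set.toFinite _)) (not_lt.mp hle)
  set D := (depSet L v).toFinset
  have hD : ∀ q, q ∈ D ↔ v ++ [q] ∈ L := fun q => Set.mem_toFinset
  have hcD : c ∈ D := (hD c).mpr (hc.mem hL)
  have hdD : d ∈ D := (hD d).mpr (hd.mem hL)
  have hdD' : d ∈ D.erase c := Finset.mem_erase.mpr ⟨hcd.symm, hdD⟩
  have hD2 : 2 ≤ D.card := by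
    simpa [Finset.card_pair hcd] using
      Finset.card_le_card (Finset.insert_subset hcD (Finset.singleton_subset_iff.mpr hdD))
  -- `m(v) = ∑_{q ∈ D(v)} #A(vq)`, and every `q ∈ D(v)` has at least one left extension
  have hrest : D.card - 2 ≤ ∑ q ∈ (D.erase c).erase d, (arrSet L (v ++ [q])).ncard := by
    calc D.card - 2 = ((D.erase c).erase d).card := by
          rw [Finset.card_erase_of_mem hdD', Finset.card_erase_of_mem hcD, Nat.sub_sub]
      _ ≤ _ := by
          simpa using Finset.card_nsmul_le_sum ((D.erase c).erase d)
            (fun q => (arrSet L (v ++ [q])).ncard) 1 fun q hq => ncard_arrSet_pos hL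
              ((hD q).mp (Finset.mem_of_mem_erase (Finset.mem_of_mem_erase hq)))
  have hsum : (arrSet L (v ++ [c])).ncard + (arrSet L (v ++ [d])).ncard + (D.card - 2)
      ≤ extCount L v := by
    calc _ ≤ (arrSet L (v ++ [c])).ncard + (arrSet L (v ++ [d])).ncard
            + ∑ q ∈ (D.erase c).erase d, (arrSet L (v ++ [q])).ncard := by gcongr
      _ = ∑ q ∈ D, (arrSet L (v ++ [q])).ncard := by
          rw [← Finset.add_sum_erase _ _ hcD, ← Finset.add_sum_erase _ _ hdD', add_assoc]
      _ ≤ extCount L v := by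
          rw [extCount_eq_sum]; exact Finset.sum_le_sum_of_subset (Finset.subset_univ _)
  have hDcard : (depSet L v).ncard = D.card := Set.ncard_eq_toFinset_card' _
  exact hv ⟨⟨heq ▸ hc, hDcard ▸ hD2⟩, by unfold LeftSpecial at hd; omega⟩

lemma exists_append_singleton_prefix {u v : List A} (h : u <+: v) (hne : u ≠ v) :
    ∃ c, u ++ [c] <+: v := by
  obtain ⟨_ | ⟨c, t⟩, rfl⟩ := h
  · simp at hne
  · exact ⟨c, t, by simp⟩

lemma exists_fork_of_not_prefix :
    ∀ {u v : List A}, ¬ u <+: v → ¬ v <+: u →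
      ∃ p a b, a ≠ b ∧ p ++ [a] <+: u ∧ p ++ [b] <+: v
  | [], _, huv, _ => absurd List.nil_prefix huv
  | _ :: _, [], _, hvu => absurd List.nil_prefix hvu
  | a :: u, b :: v, huv, hvu => by
    by_cases hab : a = b
    · subst hab
      obtain ⟨p, c, d, hcd, hpc, hpd⟩ := exists_fork_of_not_prefix
        (fun h => huv (List.cons_prefix_cons.mpr ⟨rfl, h⟩))
        (fun h => hvu (List.cons_prefix_cons.mpr ⟨rfl, h⟩))
      exact ⟨a :: p, c, d, hcd, List.cons_prefix_cons.mpr ⟨rfl, hpc⟩,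
        List.cons_prefix_cons.mpr ⟨rfl, hpd⟩⟩
    · exact ⟨[], a, b, hab, by simp, by simp⟩

lemma exists_seq_forall_ofFn {P : List A → Prop} (h0 : P [])
    (hstep : ∀ u, P u → ∃ a, P (u ++ [a])) :
    ∃ x : ℕ → A, ∀ n, P (List.ofFn fun i : Fin n => x i) := by
  choose next hnext using hstep
  let g : ℕ → {u // P u} := fun n =>
    Nat.rec ⟨[], h0⟩ (fun _ u => ⟨u.1 ++ [next u.1 u.2], hnext u.1 u.2⟩) n
  refine ⟨fun n => next (g n).1 (g n).2, fun n => ?_⟩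
  suffices (List.ofFn fun i : Fin n => next (g i).1 (g i).2) = (g n).1 from this ▸ (g n).2
  induction n with
  | zero => rfl
  | succ n ih =>
    rw [List.ofFn_succ', List.concat_eq_append]
    simp only [Fin.val_castSucc, Fin.val_last, ih]
    rfl

lemma rInf_of_forall_ofFn_mem {L : Set (List A)} (hL : IsLanguage L) {x : ℕ → A}
    (h : ∀ n, (List.ofFn fun i : Fin n => x i) ∈ L) : RInf L x := by
  intro m n
  have : (List.ofFn fun i : Fin n => x (m + i))
      = (List.ofFn fun i : Fin (m + n) => x i).drop m := by
    apply List.ext_getElem <;> simp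
  rw [this]
  exact hL.mem_of_infix (h _) (List.drop_suffix _ _).isInfix

def FinitelyCovered (L T : Set (List A)) : Prop :=
  ∃ S : Set (ℕ → A), S.Finite ∧ (∀ x ∈ S, RInf L x) ∧
    ∀ u ∈ T, ∃ x ∈ S, (List.ofFn fun i : Fin u.length => x i) = u

namespace FinitelyCovered

variable {L T T' : Set (List A)}

lemma mono (h : FinitelyCovered L T) (hT : T' ⊆ T) : FinitelyCovered L T' :=
  let ⟨S, hfin, hS, hcov⟩ := h
  ⟨S, hfin, hS, fun u hu => hcov u (hT hu)⟩

lemma empty : FinitelyCovered L ∅ :=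
  ⟨∅, Set.finite_empty, by simp, by simp⟩

lemma union (h : FinitelyCovered L T) (h' : FinitelyCovered L T') :
    FinitelyCovered L (T ∪ T') := by
  obtain ⟨S, hfin, hS, hcov⟩ := h
  obtain ⟨S', hfin', hS', hcov'⟩ := h'
  refine ⟨S ∪ S', hfin.union hfin', fun x hx => hx.elim (hS x) (hS' x), ?_⟩
  rintro u (hu | hu)
  · obtain ⟨x, hx, hux⟩ := hcov u hu
    exact ⟨x, Or.inl hx, hux⟩
  · obtain ⟨x, hx, hux⟩ := hcov' u hu
    exact ⟨x, Or.inr hx, hux⟩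

lemma iUnion {ι : Type*} [Finite ι] {s : ι → Set (List A)}
    (h : ∀ i, FinitelyCovered L (s i)) : FinitelyCovered L (⋃ i, s i) := by
  choose S hfin hS hcov using h
  refine ⟨⋃ i, S i, Set.finite_iUnion hfin, fun x hx => ?_, fun u hu => ?_⟩
  · obtain ⟨i, hi⟩ := Set.mem_iUnion.mp hx
    exact hS i x hi
  · obtain ⟨i, hi⟩ := Set.mem_iUnion.mp hu
    obtain ⟨x, hx, hux⟩ := hcov i u hi
    exact ⟨x, Set.mem_iUnion.mpr ⟨i, hx⟩, hux⟩

lemma of_chain (hL : IsLanguage L) (hTL : T ⊆ L)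
    (hT : ∀ u ∈ T, ∀ v ∈ T, u <+: v ∨ v <+: u) : FinitelyCovered L T := by
  rcases T.eq_empty_or_nonempty with rfl | ⟨w, hw⟩
  · exact empty
  let P : List A → Prop := fun u => u ∈ L ∧ ∀ v ∈ T, u <+: v ∨ v <+: u
  have h0 : P [] := ⟨hL.mem_of_infix (hTL hw) List.nil_infix, fun _ _ => Or.inl List.nil_prefix⟩
  have hstep : ∀ u, P u → ∃ a, P (u ++ [a]) := by
    rintro u ⟨huL, hu⟩
    by_cases hlong : ∃ v ∈ T, u.length < v.length
    · obtain ⟨v, hv, hlt⟩ := hlong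
      have huv : u <+: v := (hu v hv).resolve_right fun h => absurd h.length_le (by omega)
      obtain ⟨a, hua⟩ := exists_append_singleton_prefix huv (by rintro rfl; omega)
      refine ⟨a, hL.mem_of_infix (hTL hv) hua.isInfix, fun v' hv' => ?_⟩
      rcases hT v hv v' hv' with h | h
      · exact Or.inl (hua.trans h)
      · exact List.prefix_or_prefix_of_prefix hua h
    · push Not at hlong
      obtain ⟨a, ha⟩ := hL.2.2 u huL
      refine ⟨a, ha, fun v hv => Or.inr ?_⟩
      rcases hu v hv with h | h
      · exact (h.eq_of_length_le (hlong v hv)).symm ▸ List.prefix_append _ _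
      · exact h.trans (List.prefix_append _ _)
  obtain ⟨x, hx⟩ := exists_seq_forall_ofFn h0 hstep
  refine ⟨{x}, Set.finite_singleton x, fun y hy => hy ▸ rInf_of_forall_ofFn_mem hL
    fun n => (hx n).1, fun v hv => ⟨x, rfl, ?_⟩⟩
  rcases (hx v.length).2 v hv with h | h
  · exact h.eq_of_length (by simp)
  · exact (h.eq_of_length (by simp)).symm

lemma prefixes (hL : IsLanguage L) {v : List A} (hv : v ∈ L) :
    FinitelyCovered L {u | u <+: v} :=
  of_chain hL (fun _ hu => hL.mem_of_infix hv (hu : _ <+: v).isInfix)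
    fun _ hu _ hu' => List.prefix_or_prefix_of_prefix hu hu'

end FinitelyCovered

lemma exists_leftSpecialFork_of_not_prefix [Finite A] {L : Set (List A)} (hL : IsLanguage L)
    {w u v : List A} (hu : LeftSpecial L u) (hv : LeftSpecial L v)
    (hwu : w <+: u) (hwv : w <+: v) (huv : ¬ u <+: v) (hvu : ¬ v <+: u) :
    ∃ p, w <+: p ∧ p.length < v.length ∧ IsLeftSpecialFork L p := by
  obtain ⟨u, rfl⟩ := hwu
  obtain ⟨v, rfl⟩ := hwv
  rw [List.prefix_append_right_inj] at huv hvu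
  obtain ⟨p, a, b, hab, hpa, hpb⟩ := exists_fork_of_not_prefix huv hvu
  refine ⟨w ++ p, List.prefix_append _ _, by simpa using hpb.length_le, a, b, hab, ?_, ?_⟩
  · exact hu.of_prefix hL (by simpa using (List.prefix_append_right_inj w).mpr hpa)
  · exact hv.of_prefix hL (by simpa using (List.prefix_append_right_inj w).mpr hpb)

theorem finitelyCovered_leftSpecial_extensions [Finite A] {L : Set (List A)}
    (hL : IsLanguage L) (hns : ∀ w, ¬ StrongBispecial L w) (w : List A) :
    FinitelyCovered L {u | LeftSpecial L u ∧ w <+: u} := by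
  induction hn : (arrSet L w).ncard using Nat.strong_induction_on generalizing w with
  | _ n ih =>
  by_cases hfork : ∃ v, w <+: v ∧ IsLeftSpecialFork L v
  · obtain ⟨v, ⟨hwv, a, b, hab, ha, hb⟩, hmin⟩ :=
      WellFounded.has_min (measure List.length).wf _ hfork
    have hv : LeftSpecial L v := ha.of_prefix hL (List.prefix_append _ _)
    have hcomp : ∀ u, LeftSpecial L u → w <+: u → u <+: v ∨ v <+: u := by
      intro u hu hwu
      by_contra! h
      obtain ⟨p, hwp, hlt, hp⟩ :=
        exists_leftSpecialFork_of_not_prefix hL hu hv hwu hwv h.1 h.2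
      exact hmin p ⟨hwp, hp⟩ hlt
    have hchild : ∀ c, FinitelyCovered L {u | LeftSpecial L u ∧ v ++ [c] <+: u} := by
      intro c
      by_cases hc : LeftSpecial L (v ++ [c])
      · obtain ⟨d, hd, hdc⟩ : ∃ d, LeftSpecial L (v ++ [d]) ∧ c ≠ d := by
          by_cases hca : c = a
          · exact ⟨b, hb, hca ▸ hab⟩
          · exact ⟨a, ha, hca⟩
        refine ih _ ?_ _ rfl
        calc _ < (arrSet L v).ncard := ncard_arrSet_append_lt hL (hns v) hdc hc hd
          _ ≤ n := hn ▸ Set.ncard_le_ncard (arrSet_subset_of_prefix hL hwv) (Set.toFinite _)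
      · exact FinitelyCovered.empty.mono fun u hu => hc (hu.1.of_prefix hL hu.2)
    refine ((FinitelyCovered.prefixes hL (hv.mem hL)).union
      (FinitelyCovered.iUnion hchild)).mono ?_
    rintro u ⟨hu, hwu⟩
    rcases hcomp u hu hwu with h | h
    · exact Or.inl h
    rcases eq_or_ne v u with rfl | hne
    · exact Or.inl List.prefix_rfl
    obtain ⟨c, hc⟩ := exists_append_singleton_prefix h hne
    exact Or.inr (Set.mem_iUnion.mpr ⟨c, hu, hc⟩)
  · refine FinitelyCovered.of_chain hL (fun u hu => hu.1.mem hL) ?_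
    rintro u ⟨hu, hwu⟩ v ⟨hv, hwv⟩
    by_contra! h
    obtain ⟨p, hwp, -, hp⟩ := exists_leftSpecialFork_of_not_prefix hL hu hv hwu hwv h.1 h.2
    exact hfork ⟨p, hwp, hp⟩

theorem exists_finset_rInf_of_leftSpecial [Finite A] {L : Set (List A)} (hL : IsLanguage L)
    (hns : ∀ w, ¬ StrongBispecial L w) :
    ∃ S : Finset (ℕ → A), (∀ x ∈ S, RInf L x) ∧
      ∀ w, LeftSpecial L w → ∃ x ∈ S, (List.ofFn fun i : Fin w.length => x i) = w := by
  obtain ⟨S, hfin, hS, hcov⟩ := finitelyCovered_leftSpecial_extensions hL hns []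
  exact ⟨hfin.toFinset, by simpa using hS, fun w hw => by
    simpa using hcov w ⟨hw, List.nil_prefix⟩⟩

section Reverse

variable {L : Set (List A)}

lemma IsLanguage.reverse_preimage (hL : IsLanguage L) : IsLanguage (List.reverse ⁻¹' L) := by
  refine ⟨fun w hw v hv => hL.1 _ hw _ (List.reverse_infix.mpr hv), fun w hw => ?_,
    fun w hw => ?_⟩
  · obtain ⟨a, ha⟩ := hL.2.2 w.reverse hw
    exact ⟨a, by simpa using ha⟩
  · obtain ⟨a, ha⟩ := hL.2.1 w.reverse hw
    exact ⟨a, by simpa using ha⟩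

lemma arrSet_reverse_preimage (w : List A) :
    arrSet (List.reverse ⁻¹' L) w = depSet L w.reverse := by
  ext; simp [arrSet, depSet]

lemma depSet_reverse_preimage (w : List A) :
    depSet (List.reverse ⁻¹' L) w = arrSet L w.reverse := by
  ext; simp [arrSet, depSet]

lemma extCount_reverse_preimage (w : List A) :
    extCount (List.reverse ⁻¹' L) w = extCount L w.reverse := by
  have : {p : A × A | p.1 :: (w ++ [p.2]) ∈ List.reverse ⁻¹' L}
      = Prod.swap '' {p : A × A | p.1 :: (w.reverse ++ [p.2]) ∈ L} := by
    rw [Set.image_swap_eq_preimage_swap]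
    ext; simp
  rw [extCount, this, Set.ncard_image_of_injective _ Prod.swap_injective, extCount]

lemma StrongBispecial.of_reverse_preimage {w : List A}
    (h : StrongBispecial (List.reverse ⁻¹' L) w) : StrongBispecial L w.reverse := by
  obtain ⟨⟨hA, hD⟩, hm⟩ := h
  rw [arrSet_reverse_preimage] at hA hm
  rw [depSet_reverse_preimage] at hD hm
  rw [extCount_reverse_preimage] at hm
  exact ⟨⟨hD, hA⟩, by omega⟩

lemma RInf.lInf_of_reverse_preimage {x : ℕ → A} (h : RInf (List.reverse ⁻¹' L) x) :
    LInf L x := by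
  intro m n
  have : (List.ofFn fun i : Fin n => x (m + (n - 1 - i)))
      = (List.ofFn fun i : Fin n => x (m + i)).reverse := by
    apply List.ext_getElem <;> simp
  exact this ▸ h m n

end Reverse

/-- without strong bispecials, left special words are prefixes of
finitely many right-infinite sequences, and right special words are suffixes of
finitely many left-infinite sequences. -/
theorem stmt4 [Fintype A] (L : Set (List A)) (hL : IsLanguage L)
    (hns : ∀ w : List A, ¬ StrongBispecial L w) :
    (∃ S : Finset (ℕ → A), (∀ x ∈ S, RInf L x) ∧
      ∀ w ∈ L, LeftSpecial L w → ∃ x ∈ S, ∀ i : Fin w.length, w.get i = x (i : ℕ)) ∧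
    (∃ S : Finset (ℕ → A), (∀ y ∈ S, LInf L y) ∧
      ∀ w ∈ L, RightSpecial L w →
        ∃ y ∈ S, ∀ i : Fin w.length, w.get i = y (w.length - 1 - (i : ℕ))) := by
  constructor
  · obtain ⟨S, hS, hcov⟩ := exists_finset_rInf_of_leftSpecial hL hns
    refine ⟨S, hS, fun w _ hw => ?_⟩
    obtain ⟨x, hx, hwx⟩ := hcov w hw
    exact ⟨x, hx, fun i => by rw [List.get_eq_getElem, List.getElem_of_eq hwx.symm]; simp⟩
  · obtain ⟨S, hS, hcov⟩ := exists_finset_rInf_of_leftSpecial hL.reverse_preimage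
      fun w hw => hns _ hw.of_reverse_preimage
    refine ⟨S, fun y hy => (hS y hy).lInf_of_reverse_preimage, fun w _ hw => ?_⟩
    obtain ⟨y, hy, hwy⟩ := hcov w.reverse (by
      rwa [LeftSpecial, arrSet_reverse_preimage, List.reverse_reverse])
    refine ⟨y, hy, fun i => ?_⟩
    have hi : w.length - 1 - i < w.reverse.length := by simp; omega
    calc w.get i = w.reverse[w.length - 1 - i] := by
          rw [List.getElem_reverse, List.get_eq_getElem]; congr 1; omega
      _ = y (w.length - 1 - i) := by rw [List.getElem_of_eq hwy.symm]; simp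
end

section
/- Let L be a language satisfying a local order condition, and let G_n denote its Rauzy graph of order n. If G_n is connected (as an undirected graph) but G_{n+1} is not connected, then some bispecial word of length n in L has a connection. -/
open List Set

variable {A : Type*}

variable {F : Finset A}

/-- An edge of the Rauzy graph: from `av` to `vb` when `avb ∈ L`. -/
def RauzyEdge (L : Set (List A)) (w w' : List A) : Prop :=
  ∃ (a b : A) (v : List A), w = a :: v ∧ w' = v ++ [b] ∧ a :: (v ++ [b]) ∈ L

/-- Connectedness (as an undirected graph) of the Rauzy graph `G_n`. -/
def RauzyConnected (L : Set (List A)) (n : ℕ) : Prop :=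
  ∀ w ∈ L, ∀ w' ∈ L, w.length = n → w'.length = n →
    Relation.ReflTransGen
      (fun u v => u ∈ L ∧ v ∈ L ∧ u.length = n ∧ v.length = n ∧
        (RauzyEdge L u v ∨ RauzyEdge L v u)) w w'

/-!
Suppose no bispecial word of length `n` has a connection; we show `G_{n+1}` is connected.
For `w ∈ L_n` the vertices `aw` and `wb` of `G_{n+1}` form the extension graph of `w`. If that
graph is disconnected, `w` is bispecial, and the order condition orders its components: the
component of the least arrival lies below the least arrival `a'` and departure `b'` outside it,
and its largest arrival and departure form a connection with `(a', b')`. Hence every extension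
graph is connected, and since an edge `av → vb` of `G_n` makes `avb` a vertex of the extension
graphs of both `av` and `vb`, connectedness of `G_n` lifts to `G_{n+1}`.
-/

open Function Relation SimpleGraph

namespace IsLanguage

variable {L : Set (List A)} {w : List A} {a b : A}

theorem cons_mem (hL : IsLanguage L) (h : a :: (w ++ [b]) ∈ L) : a :: w ∈ L :=
  hL.1 _ h _ (IsPrefix.isInfix ⟨[b], by simp⟩)

theorem append_mem (hL : IsLanguage L) (h : a :: (w ++ [b]) ∈ L) : w ++ [b] ∈ L :=
  hL.1 _ h _ (IsSuffix.isInfix ⟨[a], rfl⟩)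

theorem tail_mem (hL : IsLanguage L) (h : a :: w ∈ L) : w ∈ L :=
  hL.1 _ h _ (IsSuffix.isInfix ⟨[a], rfl⟩)

theorem exists_cons_append_mem (hL : IsLanguage L) (h : a :: w ∈ L) :
    ∃ b, a :: (w ++ [b]) ∈ L := by
  simpa using hL.2.2 _ h

end IsLanguage

section FrontOrder

/-- `r` with the elements of `s` moved in front of all others, so that elements of `s` that are
consecutive among `s` become consecutive in the whole of `A`. -/
def frontOrder (s : Set A) (r : A → A → Prop) (x y : A) : Prop :=
  (x ∈ s ∧ y ∉ s) ∨ ((x ∈ s ↔ y ∈ s) ∧ r x y)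

def ConsecutiveOn (s : Set A) (r : A → A → Prop) (a a' : A) : Prop :=
  r a a' ∧ ∀ c ∈ s, ¬ (r a c ∧ r c a')

variable {s : Set A} {r : A → A → Prop}

instance [IsStrictTotalOrder A r] : IsStrictTotalOrder A (frontOrder s r) where
  trichotomous x y hxy hyx := by
    unfold frontOrder at hxy hyx
    by_cases hx : x ∈ s <;> by_cases hy : y ∈ s <;> simp_all
    all_goals exact Std.Trichotomous.trichotomous x y hxy hyx
  irrefl x h := by
    rcases h with ⟨hx, hx'⟩ | ⟨-, h⟩
    · exact hx' hx
    · exact irrefl x h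
  trans x y z hxy hyz := by
    unfold frontOrder at *
    by_cases hx : x ∈ s <;> by_cases hy : y ∈ s <;> by_cases hz : z ∈ s <;> simp_all
    all_goals exact _root_.trans hxy hyz

theorem frontOrder_iff {x y : A} (hx : x ∈ s) (hy : y ∈ s) : frontOrder s r x y ↔ r x y := by
  simp [frontOrder, hx, hy]

theorem ConsecutiveOn.consecutiveIn_frontOrder {a a' : A} (h : ConsecutiveOn s r a a')
    (ha : a ∈ s) (ha' : a' ∈ s) : ConsecutiveIn (frontOrder s r) a a' := by
  refine ⟨(frontOrder_iff ha ha').2 h.1, fun c ⟨hac, hca'⟩ => ?_⟩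
  by_cases hc : c ∈ s
  · exact h.2 c hc ⟨(frontOrder_iff ha hc).1 hac, (frontOrder_iff hc ha').1 hca'⟩
  · simp [frontOrder, hc, ha'] at hca'

end FrontOrder

section ExtensionGraph

variable {L : Set (List A)} {w : List A}

def extAdj (L : Set (List A)) (w : List A) : A ⊕ A → A ⊕ A → Prop
  | .inl a, .inr b => a :: (w ++ [b]) ∈ L
  | .inr b, .inl a => a :: (w ++ [b]) ∈ L
  | _, _ => False

/-- The extension graph of `w`: `.inl a` stands for the arrival `a`, `.inr b` for the departure
`b`, and `.inl a` is joined to `.inr b` when `awb ∈ L`. -/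
def extGraph (L : Set (List A)) (w : List A) : SimpleGraph (A ⊕ A) where
  Adj := extAdj L w
  symm := ⟨by rintro (a | b) (a' | b') h <;> exact h⟩
  loopless := ⟨by rintro (a | b) h <;> exact h⟩

def extVertex (w : List A) : A ⊕ A → List A :=
  Sum.elim (· :: w) (w ++ [·])

def ExtConnected (L : Set (List A)) (w : List A) : Prop :=
  ∀ a a', a :: w ∈ L → a' :: w ∈ L → (extGraph L w).Reachable (.inl a) (.inl a')

theorem reachable_inl_inr {a b : A} (h : a :: (w ++ [b]) ∈ L) :
    (extGraph L w).Reachable (.inl a) (.inr b) :=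
  Adj.reachable h

theorem reachable_inr_inl {a b : A} (h : a :: (w ++ [b]) ∈ L) :
    (extGraph L w).Reachable (.inr b) (.inl a) :=
  Adj.reachable h

theorem ExtConnected.reachable (hL : IsLanguage L) (h : ExtConnected L w) {x y : A ⊕ A}
    (hx : extVertex w x ∈ L) (hy : extVertex w y ∈ L) : (extGraph L w).Reachable x y := by
  have toLeft :
      ∀ x, extVertex w x ∈ L → ∃ a, a :: w ∈ L ∧ (extGraph L w).Reachable x (.inl a)
  · rintro (a | b) hx
    · exact ⟨a, hx, .refl _⟩
    · obtain ⟨a, ha⟩ := hL.2.1 _ hx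
      exact ⟨a, hL.cons_mem ha, reachable_inr_inl ha⟩
  obtain ⟨a, ha, hxa⟩ := toLeft x hx
  obtain ⟨a', ha', hya'⟩ := toLeft y hy
  exact hxa.trans ((h a a' ha ha').trans hya'.symm)

theorem extConnected_of_not_bispecial [Finite A] (hL : IsLanguage L) (h : ¬ Bispecial L w) :
    ExtConnected L w := by
  intro a a' ha ha'
  rcases not_and_or.1 h with hA | hD
  · obtain rfl : a = a' := (ncard_le_one (toFinite _)).1 (not_lt.1 hA) a ha a' ha'
    rfl
  · obtain ⟨b, hb⟩ := hL.exists_cons_append_mem ha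
    obtain ⟨b', hb'⟩ := hL.exists_cons_append_mem ha'
    obtain rfl : b = b' := (ncard_le_one (toFinite _)).1 (not_lt.1 hD)
      b (hL.append_mem hb) b' (hL.append_mem hb')
    exact (reachable_inl_inr hb).trans (reachable_inr_inl hb')

end ExtensionGraph

namespace OrderConditionAt

variable {L : Set (List A)} {w : List A} {rA rD : A → A → Prop}

theorem swap (hOC : OrderConditionAt L w rA rD) : OrderConditionAt L w (swap rA) (swap rD) :=
  fun a b c d hab hcd hac hbd => hOC b a d c hab.symm hcd.symm hbd hac

theorem frontOrder (hL : IsLanguage L) (hOC : OrderConditionAt L w rA rD) :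
    OrderConditionAt L w (frontOrder (arrSet L w) rA) (frontOrder (depSet L w) rD) := by
  intro a b c d hab hcd hac hbd
  rw [frontOrder_iff (s := arrSet L w) (hL.cons_mem hac) (hL.cons_mem hbd),
    frontOrder_iff (s := depSet L w) (hL.append_mem hac) (hL.append_mem hbd)]
  exact hOC a b c d hab hcd hac hbd

theorem mem_of_not_rel [Std.Trichotomous rA] (hOC : OrderConditionAt L w rA rD) {a b c d : A}
    (had : a :: (w ++ [d]) ∈ L) (hcb : c :: (w ++ [b]) ∈ L) (hca : ¬ rA c a)
    (hdb : ¬ rD d b) : a :: (w ++ [b]) ∈ L := by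
  by_cases hac : a = c
  · rwa [hac]
  by_cases hdb' : d = b
  · rwa [← hdb']
  have hac' : ¬ rA a c := fun h => hdb ((hOC a c d b hac hdb' had hcb).1 h)
  exact absurd (Std.Trichotomous.trichotomous a c hac' hca) hac

/-- Along the component of `m`, which avoids `a'`, the order condition with the edge `a'wb'`
keeps every letter on the same side of `a'` (arrivals) and of `b'` (departures) as `m`. -/
theorem rel_of_reachable (hOC : OrderConditionAt L w rA rD) {m a' b' : A}
    (ha'b' : a' :: (w ++ [b']) ∈ L) (hm : rA m a')
    (hsep : ¬ (extGraph L w).Reachable (.inl m) (.inl a')) {x : A ⊕ A}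
    (hx : (extGraph L w).Reachable (.inl m) x) : Sum.elim (rA · a') (rD · b') x := by
  rw [reachable_iff_reflTransGen] at hx
  induction hx with
  | refl => exact hm
  | @tail y z hmy hyz ih =>
    rw [← reachable_iff_reflTransGen] at hmy
    rcases y with c | d <;> rcases z with c' | d'
    · exact hyz.elim
    · have hc : c ≠ a' := by rintro rfl; exact hsep hmy
      have hd : d' ≠ b' := by
        rintro rfl
        exact hsep ((hmy.trans (reachable_inl_inr hyz)).trans (reachable_inr_inl ha'b'))
      exact (hOC c a' d' b' hc hd hyz ha'b').1 ih
    · have hd : d ≠ b' := by rintro rfl; exact hsep (hmy.trans (reachable_inr_inl ha'b'))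
      have hc : c' ≠ a' := by rintro rfl; exact hsep (hmy.trans (reachable_inr_inl hyz))
      exact (hOC c' a' d b' hc hd hyz ha'b').2 ih
    · exact hyz.elim

theorem exists_connection [Finite A] [IsStrictTotalOrder A rA] [IsStrictTotalOrder A rD]
    (hL : IsLanguage L) (hOC : OrderConditionAt L w rA rD) (hw : ¬ ExtConnected L w) :
    ∃ a a' b b', ConsecutiveOn (arrSet L w) rA a a' ∧ ConsecutiveOn (depSet L w) rD b b' ∧
      a :: (w ++ [b]) ∈ L ∧ a' :: (w ++ [b']) ∈ L ∧
      a :: (w ++ [b']) ∉ L ∧ a' :: (w ++ [b]) ∉ L := by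
  have wfA := Finite.wellFounded_of_trans_of_irrefl rA
  have wfD := Finite.wellFounded_of_trans_of_irrefl rD
  have wfA' := Finite.wellFounded_of_trans_of_irrefl (Function.swap rA)
  have wfD' := Finite.wellFounded_of_trans_of_irrefl (Function.swap rD)
  obtain ⟨p, q, hp, hq, hpq⟩ : ∃ p q, p :: w ∈ L ∧ q :: w ∈ L ∧
      ¬ (extGraph L w).Reachable (.inl p) (.inl q) := by
    simpa [ExtConnected] using hw
  obtain ⟨m, hm, hmin⟩ := wfA.has_min (arrSet L w) ⟨p, hp⟩
  set R := (extGraph L w).Reachable (.inl m)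
  obtain ⟨a', ⟨ha', ha'R⟩, ha'min⟩ := wfA.has_min {x | x :: w ∈ L ∧ ¬ R (.inl x)} <| by
    by_cases hmp : R (.inl p)
    · exact ⟨q, hq, fun hmq => hpq (hmp.symm.trans hmq)⟩
    · exact ⟨p, hp, hmp⟩
  obtain ⟨c, hc⟩ := hL.exists_cons_append_mem ha'
  obtain ⟨b', ⟨hb', hb'R⟩, hb'min⟩ := wfD.has_min {y | w ++ [y] ∈ L ∧ ¬ R (.inr y)}
    ⟨c, hL.append_mem hc, fun h => ha'R (h.trans (reachable_inr_inl hc))⟩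
  obtain ⟨g, hg⟩ := hL.2.1 _ hb'
  have ha'b' : a' :: (w ++ [b']) ∈ L := hOC.mem_of_not_rel hc hg
    (ha'min g ⟨hL.cons_mem hg, fun h => hb'R (h.trans (reachable_inl_inr hg))⟩)
    (hb'min c ⟨hL.append_mem hc, fun h => ha'R (h.trans (reachable_inr_inl hc))⟩)
  obtain ⟨a, ⟨ha, haR⟩, hamax⟩ :=
    wfA'.has_min {x | x :: w ∈ L ∧ R (.inl x)} ⟨m, hm, .refl _⟩
  obtain ⟨e, he⟩ := hL.exists_cons_append_mem ha
  obtain ⟨b, ⟨hb, hbR⟩, hbmax⟩ := wfD'.has_min {y | w ++ [y] ∈ L ∧ R (.inr y)}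
    ⟨e, hL.append_mem he, haR.trans (reachable_inl_inr he)⟩
  obtain ⟨k, hk⟩ := hL.2.1 _ hb
  have hab : a :: (w ++ [b]) ∈ L := hOC.swap.mem_of_not_rel he hk
    (hamax k ⟨hL.cons_mem hk, hbR.trans (reachable_inr_inl hk)⟩)
    (hbmax e ⟨hL.append_mem he, haR.trans (reachable_inl_inr he)⟩)
  have hma' : rA m a' := by
    by_contra h
    exact ha'R (Std.Trichotomous.trichotomous m a' h (hmin a' ha') ▸ .refl _)
  have below : ∀ {x}, R x → Sum.elim (rA · a') (rD · b') x :=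
    hOC.rel_of_reachable ha'b' hma' ha'R
  refine ⟨a, a', b, b', ⟨below haR, fun x hx ⟨hax, hxa'⟩ => ?_⟩,
    ⟨below hbR, fun y hy ⟨hby, hyb'⟩ => ?_⟩, hab, ha'b',
    fun h => hb'R (haR.trans (reachable_inl_inr h)),
    fun h => ha'R (hbR.trans (reachable_inr_inl h))⟩
  · by_cases hxR : R (.inl x)
    · exact hamax x ⟨hx, hxR⟩ hax
    · exact ha'min x ⟨hx, hxR⟩ hxa'
  · by_cases hyR : R (.inr y)
    · exact hbmax y ⟨hy, hyR⟩ hby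
    · exact hb'min y ⟨hy, hyR⟩ hyb'

end OrderConditionAt

section Connection

variable {L : Set (List A)}

theorem extConnected_or_hasConnection [Finite A] (hL : IsLanguage L)
    (hord : LocalOrderCondition L) (w : List A) :
    ExtConnected L w ∨ Bispecial L w ∧ HasConnection L w := by
  by_cases hw : ExtConnected L w
  · exact .inl hw
  have hb : Bispecial L w := by_contra fun hb => hw (extConnected_of_not_bispecial hL hb)
  obtain ⟨rA, rD, hrA, hrD, hOC⟩ := hord w hb
  obtain ⟨a, a', b, b', haa', hbb', hab, ha'b', hab', ha'b⟩ := hOC.exists_connection hL hw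
  refine .inr ⟨hb, frontOrder (arrSet L w) rA, frontOrder (depSet L w) rD, inferInstance,
    inferInstance, hOC.frontOrder hL, a, a', b, b', ?_, ?_, hab, ha'b', hab', ha'b⟩
  · exact haa'.consecutiveIn_frontOrder (hL.cons_mem hab) (hL.cons_mem ha'b')
  · exact hbb'.consecutiveIn_frontOrder (hL.append_mem hab) (hL.append_mem ha'b')

end Connection

section Lifting

variable {L : Set (List A)} {w : List A}

/-- The edge relation of `RauzyConnected L n`. -/
def RauzyAdj (L : Set (List A)) (n : ℕ) (u v : List A) : Prop :=
  u ∈ L ∧ v ∈ L ∧ u.length = n ∧ v.length = n ∧ (RauzyEdge L u v ∨ RauzyEdge L v u)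

theorem rauzyAdj_of_extGraph_adj (hL : IsLanguage L) {x y : A ⊕ A}
    (h : (extGraph L w).Adj x y) : RauzyAdj L (w.length + 1) (extVertex w x) (extVertex w y) := by
  rcases x with a | b <;> rcases y with a' | b'
  · exact h.elim
  · exact ⟨hL.cons_mem h, hL.append_mem h, by simp [extVertex], by simp [extVertex],
      .inl ⟨a, b', w, rfl, rfl, h⟩⟩
  · exact ⟨hL.append_mem h, hL.cons_mem h, by simp [extVertex], by simp [extVertex],
      .inr ⟨a', b, w, rfl, rfl, h⟩⟩
  · exact h.elim

theorem reflTransGen_rauzyAdj_of_reachable (hL : IsLanguage L) {x y : A ⊕ A}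
    (h : (extGraph L w).Reachable x y) :
    ReflTransGen (RauzyAdj L (w.length + 1)) (extVertex w x) (extVertex w y) :=
  ReflTransGen.lift (extVertex w) (fun _ _ => rauzyAdj_of_extGraph_adj hL) _ _
    ((reachable_iff_reflTransGen x y).1 h)

theorem exists_extVertex_eq {u u' : List A} (h : RauzyEdge L u u' ∨ RauzyEdge L u' u) :
    ∃ z z', extVertex u z = extVertex u' z' ∧ extVertex u z ∈ L := by
  rcases h with ⟨p, f, t, rfl, rfl, h⟩ | ⟨p, f, t, rfl, rfl, h⟩
  · exact ⟨.inr f, .inl p, by simp [extVertex], by simpa [extVertex] using h⟩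
  · exact ⟨.inl p, .inr f, by simp [extVertex], h⟩

theorem rauzyConnected_succ_of_extConnected (hL : IsLanguage L) {n : ℕ}
    (hconn : RauzyConnected L n) (hext : ∀ w ∈ L, w.length = n → ExtConnected L w) :
    RauzyConnected L (n + 1) := by
  have linked : ∀ u ∈ L, u.length = n → ∀ x y, extVertex u x ∈ L → extVertex u y ∈ L →
      ReflTransGen (RauzyAdj L (n + 1)) (extVertex u x) (extVertex u y) := by
    rintro u hu rfl x y hx hy
    exact reflTransGen_rauzyAdj_of_reachable hL ((hext u hu rfl).reachable hL hx hy)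
  rintro (_ | ⟨a, v⟩) hx (_ | ⟨a', v'⟩) hy hlx hly
  all_goals simp only [length_nil, length_cons, Nat.add_right_cancel_iff] at hlx hly
  all_goals try omega
  suffices ∀ u, ReflTransGen (RauzyAdj L n) v u → ∀ z, extVertex u z ∈ L →
      ReflTransGen (RauzyAdj L (n + 1)) (a :: v) (extVertex u z) from
    this v' (hconn v (hL.tail_mem hx) v' (hL.tail_mem hy) hlx hly) (.inl a') hy
  intro u hvu
  induction hvu with
  | refl => exact fun z hz => linked v (hL.tail_mem hx) hlx (.inl a) z hx hz
  | tail _ huu' ih =>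
    obtain ⟨-, hu', -, hlu', hedge⟩ := huu'
    obtain ⟨z, z', hzz', hz⟩ := exists_extVertex_eq hedge
    intro z'' hz''
    exact (ih z hz).trans (hzz' ▸ linked _ hu' hlu' z' z'' (hzz' ▸ hz) hz'')

end Lifting

/-- if `G_n` is connected but `G_{n+1}` is not, some bispecial
word of length `n` has a connection. -/
theorem stmt5 [Fintype A] (L : Set (List A)) (hL : IsLanguage L)
    (hord : LocalOrderCondition L) (n : ℕ)
    (hconn : RauzyConnected L n) (hnot : ¬ RauzyConnected L (n + 1)) :
    ∃ w : List A, w ∈ L ∧ w.length = n ∧ Bispecial L w ∧ HasConnection L w := by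
  by_contra hno
  refine hnot (rauzyConnected_succ_of_extConnected hL hconn fun w hw hlen => ?_)
  exact (extConnected_or_hasConnection hL hord w).resolve_right fun h => hno ⟨w, hw, hlen, h⟩
end

section
/- Suppose L satisfies an ℱ-flipped order condition. Then the relation < defined on the shift space X_L (via first disagreement of coordinates, comparing with <_D to the right and <_A to the left, with order reversal according to the parity of occurrences of letters from ℱ) is a total order, and every nonempty subset of X_L has a least upper bound and a greatest lower bound in X_L. -/
open List Set

variable {A : Type*}

variable {F : Finset A}

/-- The order on `X_L` from Definition `otra`: compare at the first disagreement
to the right using `rD` (reversed when an odd number of the agreeing letters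
`x 0, …, x (k-1)` lies in `F`), or at the first disagreement to the left using
`rA` with the analogous parity rule. -/
def flipLT [DecidableEq A] (F : Finset A) (rA rD : A → A → Prop)
    (x y : ℤ → A) : Prop :=
  (∃ k : ℕ, (∀ i : ℕ, i < k → x (i : ℤ) = y (i : ℤ)) ∧ x (k : ℤ) ≠ y (k : ℤ) ∧
    (if Even (((Finset.range k).filter (fun i : ℕ => x (i : ℤ) ∈ F)).card)
      then rD (x (k : ℤ)) (y (k : ℤ)) else rD (y (k : ℤ)) (x (k : ℤ)))) ∨
  (∃ k : ℕ, (∀ i : ℕ, i < k → x (-(i : ℤ) - 1) = y (-(i : ℤ) - 1)) ∧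
    x (-(k : ℤ) - 1) ≠ y (-(k : ℤ) - 1) ∧
    (if Even (((Finset.range k).filter (fun i : ℕ => x (-(i : ℤ) - 1) ∈ F)).card)
      then rA (x (-(k : ℤ) - 1)) (y (-(k : ℤ) - 1))
      else rA (y (-(k : ℤ) - 1)) (x (-(k : ℤ) - 1))))

/-!
A point `x` of `X_L` is determined by its right half `x 0, x 1, …` and its left half
`x (-1), x (-2), …`. On each half the comparison is a lexicographic order in which the letter
order is reversed after an odd number of `F`-letters, hence a strict total order. If `x` and `y`
differ on both sides, the word `w` between their first disagreements `a ≠ b` (left) and `c ≠ d`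
(right) is bispecial, since `a w c` and `b w d` are factors; the `F`-parity of `w` is the sum of
the two one-sided parities, so the flipped order condition at `w` says exactly that the right
and left comparisons agree. Hence on `X_L` the order is the lexicographic product of the two half
orders. Its strict rays are open in the product topology and `X_L` is compact, so the upper
bounds of a nonempty set form a nonempty compact set, which has a least element (dually for
lower bounds).
-/

open Filter Topology

theorem ite_rel_iff {r : A → A → Prop} [IsStrictTotalOrder A r] {p : Prop} [Decidable p]
    {a b : A} (hab : a ≠ b) : (if p then r a b else r b a) ↔ (p ↔ r a b) := by
  have := trichotomous_of r a b
  have := asymm_of r (a := a) (b := b)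
  split_ifs <;> tauto

section FlipLex

variable [DecidableEq A] {r : A → A → Prop} {u v w : ℕ → A} {k : ℕ}

def flipCount (F : Finset A) (u : ℕ → A) (k : ℕ) : ℕ :=
  ((Finset.range k).filter fun i => u i ∈ F).card

def flipLex (F : Finset A) (r : A → A → Prop) (u v : ℕ → A) : Prop :=
  ∃ k, (∀ i < k, u i = v i) ∧ u k ≠ v k ∧
    if Even (flipCount F u k) then r (u k) (v k) else r (v k) (u k)

theorem flipCount_congr (h : ∀ i < k, u i = v i) : flipCount F u k = flipCount F v k :=
  congrArg Finset.card <| Finset.filter_congr fun i hi => by rw [h i (Finset.mem_range.1 hi)]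

theorem exists_forall_lt_eq_and_ne (h : u ≠ v) : ∃ k, (∀ i < k, u i = v i) ∧ u k ≠ v k := by
  have hex : ∃ n, u n ≠ v n := Function.ne_iff.1 h
  exact ⟨Nat.find hex, fun i hi => not_not.1 (Nat.find_min hex hi), Nat.find_spec hex⟩

theorem flipLex_iff_of_forall_lt_eq (hk : ∀ i < k, u i = v i) (hne : u k ≠ v k) :
    flipLex F r u v ↔ if Even (flipCount F u k) then r (u k) (v k) else r (v k) (u k) := by
  refine ⟨fun ⟨j, hj, hnej, hrj⟩ => ?_, fun h => ⟨k, hk, hne, h⟩⟩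
  obtain rfl : j = k := by
    rcases lt_trichotomy j k with hjk | rfl | hkj
    exacts [absurd (hk j hjk) hnej, rfl, absurd (hj k hkj) hne]
  exact hrj

theorem flipLex_irrefl (u : ℕ → A) : ¬ flipLex F r u u :=
  fun ⟨_, _, hne, _⟩ => hne rfl

theorem flipLex_trans [IsStrictOrder A r] (huv : flipLex F r u v) (hvw : flipLex F r v w) :
    flipLex F r u w := by
  obtain ⟨k₁, h₁, hne₁, hr₁⟩ := huv
  obtain ⟨k₂, h₂, hne₂, hr₂⟩ := hvw
  rcases lt_trichotomy k₁ k₂ with hk | rfl | hk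
  · refine ⟨k₁, fun i hi => (h₁ i hi).trans (h₂ i (hi.trans hk)), ?_, ?_⟩ <;>
      rwa [← h₂ k₁ hk]
  · -- same first disagreement, hence the same parity and the same orientation of `r`
    rw [← flipCount_congr h₁] at hr₂
    have hr : if Even (flipCount F u k₁) then r (u k₁) (w k₁) else r (w k₁) (u k₁) := by
      split_ifs at hr₁ hr₂ ⊢
      exacts [_root_.trans hr₁ hr₂, _root_.trans hr₂ hr₁]
    refine ⟨k₁, fun i hi => (h₁ i hi).trans (h₂ i hi), fun he => ?_, hr⟩
    rw [he] at hr
    split_ifs at hr <;> exact irrefl _ hr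
  · refine ⟨k₂, fun i hi => (h₁ i (hi.trans hk)).trans (h₂ i hi), ?_, ?_⟩
    · rwa [h₁ k₂ hk]
    · rwa [flipCount_congr fun i hi => h₁ i (hi.trans hk), h₁ k₂ hk]

theorem flipLex_or_flipLex [Std.Trichotomous r] (h : u ≠ v) :
    flipLex F r u v ∨ flipLex F r v u := by
  obtain ⟨k, hk, hne⟩ := exists_forall_lt_eq_and_ne h
  have hk' : ∀ i < k, v i = u i := fun i hi => (hk i hi).symm
  rw [flipLex_iff_of_forall_lt_eq hk hne, flipLex_iff_of_forall_lt_eq hk' hne.symm,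
    ← flipCount_congr hk]
  have := trichotomous_of r (u k) (v k)
  split_ifs <;> tauto

instance [IsStrictTotalOrder A r] : IsStrictTotalOrder (ℕ → A) (flipLex F r) where
  irrefl := flipLex_irrefl
  trans _ _ _ := flipLex_trans
  trichotomous _ _ huv hvu := by_contra fun h => (flipLex_or_flipLex h).elim huv hvu

theorem exists_stable_flipLex (h : flipLex F r u v) :
    ∃ n, ∀ u' v' : ℕ → A, (∀ i < n, u' i = u i) → (∀ i < n, v' i = v i) → flipLex F r u' v' := by
  obtain ⟨k, hk, hne, hr⟩ := h
  refine ⟨k + 1, fun u' v' hu hv => ⟨k, fun i hi => ?_, ?_, ?_⟩⟩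
  · rw [hu i (by omega), hv i (by omega), hk i hi]
  · rwa [hu k k.lt_succ_self, hv k k.lt_succ_self]
  · rwa [flipCount_congr fun i hi => hu i (by omega), hu k k.lt_succ_self, hv k k.lt_succ_self]

end FlipLex

section Words

variable {u v u' v' : ℕ → A} {m n : ℕ}

/-- `centralWord u v m n = u (m-1) ⋯ u 0 v 0 ⋯ v (n-1)`; for the halves of `x` it is the factor
`x (-m) ⋯ x (n-1)`. -/
def centralWord (u v : ℕ → A) (m n : ℕ) : List A :=
  ((List.range m).map u).reverse ++ (List.range n).map v

theorem centralWord_succ_succ (u v : ℕ → A) (m n : ℕ) :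
    centralWord u v (m + 1) (n + 1) = u m :: (centralWord u v m n ++ [v n]) := by
  simp [centralWord, List.range_succ]

theorem centralWord_congr (hu : ∀ i < m, u i = u' i) (hv : ∀ i < n, v i = v' i) :
    centralWord u v m n = centralWord u' v' m n := by
  rw [centralWord, List.map_congr_left fun i hi => hu i (List.mem_range.1 hi),
    List.map_congr_left fun i hi => hv i (List.mem_range.1 hi), centralWord]

theorem countP_map_range_eq_flipCount [DecidableEq A] (u : ℕ → A) (k : ℕ) :
    ((List.range k).map u).countP (fun a => decide (a ∈ F)) = flipCount F u k := by
  induction k with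
  | zero => rfl
  | succ k ih =>
    by_cases h : u k ∈ F <;>
      simp [List.range_succ, flipCount, Finset.range_add_one, Finset.filter_insert, ih, h]

theorem countP_centralWord [DecidableEq A] (u v : ℕ → A) (m n : ℕ) :
    (centralWord u v m n).countP (fun a => decide (a ∈ F)) = flipCount F u m + flipCount F v n := by
  simp only [centralWord, List.countP_append, List.countP_reverse, countP_map_range_eq_flipCount]

def rightHalf (x : ℤ → A) : ℕ → A := fun n => x n

def leftHalf (x : ℤ → A) : ℕ → A := fun n => x (-(n : ℤ) - 1)

theorem flipLT_iff [DecidableEq A] {rA rD : A → A → Prop} {x y : ℤ → A} :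
    flipLT F rA rD x y ↔
      flipLex F rD (rightHalf x) (rightHalf y) ∨ flipLex F rA (leftHalf x) (leftHalf y) :=
  Iff.rfl

theorem centralWord_halves (x : ℤ → A) (m n : ℕ) :
    centralWord (leftHalf x) (rightHalf x) m n =
      List.ofFn fun i : Fin (m + n) => x (-(m : ℤ) + (i : ℕ)) := by
  apply List.ext_getElem (by simp [centralWord])
  intro i h₁ h₂
  simp only [centralWord, List.getElem_append, List.getElem_reverse, List.getElem_map,
    List.getElem_range, List.getElem_ofFn, leftHalf, rightHalf, List.length_reverse,
    List.length_map, List.length_range]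
  split_ifs <;> congr 1 <;> omega

theorem centralWord_mem {L : Set (List A)} {x : ℤ → A} (hx : x ∈ XL L) (m n : ℕ) :
    centralWord (leftHalf x) (rightHalf x) m n ∈ L := by
  rw [centralWord_halves]
  exact hx _ _

theorem halves_injective : Function.Injective fun x : ℤ → A => (rightHalf x, leftHalf x) := by
  intro x y h
  simp only [Prod.mk.injEq] at h
  funext i
  rcases i with n | n
  · exact congrFun h.1 n
  · simpa [leftHalf, Int.negSucc_eq, sub_eq_add_neg, add_comm] using congrFun h.2 n

end Words

section Consistency

variable {L : Set (List A)} {rA rD : A → A → Prop}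

theorem bispecial_of_mem [Finite A] (hL : IsLanguage L) {w : List A} {a b c d : A}
    (hab : a ≠ b) (hcd : c ≠ d) (ha : a :: (w ++ [c]) ∈ L) (hb : b :: (w ++ [d]) ∈ L) :
    Bispecial L w := by
  refine ⟨(Set.one_lt_ncard_iff (Set.toFinite _)).2 ⟨a, b, ?_, ?_, hab⟩,
    (Set.one_lt_ncard_iff (Set.toFinite _)).2 ⟨c, d, ?_, ?_, hcd⟩⟩
  exacts [hL.1 _ ha _ ⟨[], [c], by simp⟩, hL.1 _ hb _ ⟨[], [d], by simp⟩,
    hL.1 _ ha _ ⟨[a], [], by simp⟩, hL.1 _ hb _ ⟨[b], [], by simp⟩]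

theorem flipLex_rightHalf_iff_leftHalf [DecidableEq A] [Finite A] [IsStrictTotalOrder A rA]
    [IsStrictTotalOrder A rD] (hL : IsLanguage L) (hoc : FlippedOC L F rA rD) {x y : ℤ → A}
    (hx : x ∈ XL L) (hy : y ∈ XL L) (hr : rightHalf x ≠ rightHalf y)
    (hl : leftHalf x ≠ leftHalf y) :
    flipLex F rD (rightHalf x) (rightHalf y) ↔ flipLex F rA (leftHalf x) (leftHalf y) := by
  obtain ⟨k, hk, hne⟩ := exists_forall_lt_eq_and_ne hr
  obtain ⟨k', hk', hne'⟩ := exists_forall_lt_eq_and_ne hl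
  have hxw := centralWord_mem hx (k' + 1) (k + 1)
  have hyw := centralWord_mem hy (k' + 1) (k + 1)
  rw [centralWord_succ_succ] at hxw hyw
  rw [← centralWord_congr hk' hk] at hyw
  have hoc' := hoc _ (bispecial_of_mem hL hne' hne hxw hyw) _ _ _ _ hne' hne hxw hyw
  simp only [countP_centralWord, Nat.even_add] at hoc'
  rw [flipLex_iff_of_forall_lt_eq hk hne, flipLex_iff_of_forall_lt_eq hk' hne', ite_rel_iff hne,
    ite_rel_iff hne', hoc', ite_rel_iff hne]
  tauto

theorem flipLT_iff_prodLex [DecidableEq A] [Finite A] [IsStrictTotalOrder A rA]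
    [IsStrictTotalOrder A rD] (hL : IsLanguage L) (hoc : FlippedOC L F rA rD) {x y : ℤ → A}
    (hx : x ∈ XL L) (hy : y ∈ XL L) :
    flipLT F rA rD x y ↔ Prod.Lex (flipLex F rD) (flipLex F rA)
      (rightHalf x, leftHalf x) (rightHalf y, leftHalf y) := by
  rw [flipLT_iff, Prod.lex_def]
  refine ⟨?_, Or.imp_right And.right⟩
  rintro (h | h)
  · exact Or.inl h
  by_cases hr : rightHalf x = rightHalf y
  · exact Or.inr ⟨hr, h⟩
  have hl : leftHalf x ≠ leftHalf y := fun he => flipLex_irrefl _ (he ▸ h)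
  exact Or.inl ((flipLex_rightHalf_iff_leftHalf hL hoc hx hy hr hl).2 h)

theorem isStrictTotalOrder_flipLT [DecidableEq A] [Finite A] [IsStrictTotalOrder A rA]
    [IsStrictTotalOrder A rD] (hL : IsLanguage L) (hoc : FlippedOC L F rA rD) :
    IsStrictTotalOrder (XL L) fun x y => flipLT F rA rD x y := by
  have : IsStrictTotalOrder ((ℕ → A) × (ℕ → A)) (Prod.Lex (flipLex F rD) (flipLex F rA)) := {}
  have hon : (fun x y : XL L => flipLT F rA rD x y) =
      Function.onFun (Prod.Lex (flipLex F rD) (flipLex F rA))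
        fun x : XL L => (rightHalf x.1, leftHalf x.1) :=
    funext₂ fun x y => propext (flipLT_iff_prodLex hL hoc x.2 y.2)
  rw [hon]
  exact (halves_injective.comp Subtype.val_injective).isStrictTotalOrder_onFun _

end Consistency

section Topology

variable [TopologicalSpace A]

theorem continuous_rightHalf : Continuous (rightHalf : (ℤ → A) → ℕ → A) :=
  continuous_pi fun _ => continuous_apply _

theorem continuous_leftHalf : Continuous (leftHalf : (ℤ → A) → ℕ → A) :=
  continuous_pi fun _ => continuous_apply _

variable [DiscreteTopology A]

theorem isClosed_XL (L : Set (List A)) : IsClosed (XL L) := by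
  have : XL L = ⋂ (m : ℤ) (n : ℕ),
      (fun (x : ℤ → A) (i : Fin n) => x (m + (i : ℕ))) ⁻¹' {g | List.ofFn g ∈ L} := by
    ext x
    simp [XL]
  rw [this]
  exact isClosed_iInter fun m => isClosed_iInter fun n =>
    (isClosed_discrete _).preimage (by fun_prop)

theorem isCompact_XL [Finite A] (L : Set (List A)) : IsCompact (XL L) :=
  (isClosed_XL L).isCompact

theorem eventually_forall_lt_eq {X : Type*} [TopologicalSpace X] {f : X → ℕ → A}
    (hf : Continuous f) (x : X) (n : ℕ) : ∀ᶠ x' in 𝓝 x, ∀ i < n, f x' i = f x i :=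
  (eventually_all_finite (Set.finite_Iio n)).2 fun i _ =>
    ((continuous_apply i).comp hf).continuousAt.eventually_mem
      ((isOpen_discrete {f x i}).mem_nhds rfl)

theorem isOpen_setOf_flipLT [DecidableEq A] (rA rD : A → A → Prop) :
    IsOpen {p : (ℤ → A) × (ℤ → A) | flipLT F rA rD p.1 p.2} := by
  refine isOpen_iff_eventually.2 fun p hp => ?_
  rcases hp with h | h
  · obtain ⟨n, hn⟩ := exists_stable_flipLex h
    filter_upwards [eventually_forall_lt_eq (continuous_rightHalf.comp continuous_fst) p n,
      eventually_forall_lt_eq (continuous_rightHalf.comp continuous_snd) p n] with q h₁ h₂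
    exact Or.inl (hn _ _ h₁ h₂)
  · obtain ⟨n, hn⟩ := exists_stable_flipLex h
    filter_upwards [eventually_forall_lt_eq (continuous_leftHalf.comp continuous_fst) p n,
      eventually_forall_lt_eq (continuous_leftHalf.comp continuous_snd) p n] with q h₁ h₂
    exact Or.inr (hn _ _ h₁ h₂)

end Topology

section CompactOrder

variable {α : Type*} [TopologicalSpace α] {S Y : Set α} {lt : α → α → Prop}

theorem IsCompact.exists_lub [IsStrictTotalOrder S fun x y => lt x y] (hS : IsCompact S)
    (hlt : ∀ y, IsOpen {x | lt x y}) (hgt : ∀ y, IsOpen {x | lt y x}) (hYS : Y ⊆ S)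
    (hY : Y.Nonempty) :
    ∃ u ∈ S, (∀ y ∈ Y, y = u ∨ lt y u) ∧ ∀ v ∈ S, (∀ y ∈ Y, y = v ∨ lt y v) → u = v ∨ lt u v := by
  classical
  let : LinearOrder S := linearOrderOfSTO fun x y : S => lt x y
  have : CompactSpace S := isCompact_iff_compactSpace.1 hS
  have : ClosedIicTopology S := ⟨fun a => by
    rw [← isOpen_compl_iff, compl_Iic]
    exact (hgt a).preimage continuous_subtype_val⟩
  have : ClosedIciTopology S := ⟨fun a => by
    rw [← isOpen_compl_iff, compl_Ici]
    exact (hlt a).preimage continuous_subtype_val⟩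
  obtain ⟨y₀, hy₀⟩ := hY
  have hY' : (Subtype.val ⁻¹' Y : Set S).Nonempty := ⟨⟨y₀, hYS hy₀⟩, hy₀⟩
  obtain ⟨u, -, hu⟩ := isClosed_closure.isCompact.exists_isLUB hY'.closure
  rw [IsLUB, upperBounds_closure] at hu
  have hle (a b : S) : a ≤ b ↔ (a : α) = b ∨ lt a b := or_congr_left Subtype.ext_iff
  refine ⟨u, u.2, fun y hy => (hle ⟨y, hYS hy⟩ u).1 (hu.1 hy), fun v hv hvY => ?_⟩
  exact (hle u ⟨v, hv⟩).1 (hu.2 fun y hy => (hle y ⟨v, hv⟩).2 (hvY y hy))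

theorem IsCompact.exists_glb [IsStrictTotalOrder S fun x y => lt x y] (hS : IsCompact S)
    (hlt : ∀ y, IsOpen {x | lt x y}) (hgt : ∀ y, IsOpen {x | lt y x}) (hYS : Y ⊆ S)
    (hY : Y.Nonempty) :
    ∃ u ∈ S, (∀ y ∈ Y, y = u ∨ lt u y) ∧ ∀ v ∈ S, (∀ y ∈ Y, y = v ∨ lt v y) → u = v ∨ lt v u :=
  have : IsStrictTotalOrder S fun x y => flip lt x y :=
    inferInstanceAs (IsStrictTotalOrder S (Function.swap fun x y : S => lt x y))
  hS.exists_lub (lt := flip lt) hgt hlt hYS hY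

end CompactOrder

/-- under an `F`-flipped order condition, `flipLT` is a total
(strict) order on `X_L`, and every nonempty subset of `X_L` has a least upper
bound and a greatest lower bound in `X_L`. -/
theorem stmt6 [Fintype A] [DecidableEq A] (L : Set (List A)) (hL : IsLanguage L)
    (F : Finset A) (rA rD : A → A → Prop)
    (hA : IsStrictTotalOrder A rA) (hD : IsStrictTotalOrder A rD)
    (hoc : FlippedOC L F rA rD) :
    (∀ x ∈ XL L, ∀ y ∈ XL L,
        x = y ∨ flipLT F rA rD x y ∨ flipLT F rA rD y x) ∧
    (∀ x ∈ XL L, ¬ flipLT F rA rD x x) ∧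
    (∀ x ∈ XL L, ∀ y ∈ XL L, ∀ z ∈ XL L,
        flipLT F rA rD x y → flipLT F rA rD y z → flipLT F rA rD x z) ∧
    (∀ Y : Set (ℤ → A), Y ⊆ XL L → Y.Nonempty →
      (∃ u ∈ XL L, (∀ y ∈ Y, y = u ∨ flipLT F rA rD y u) ∧
        ∀ v ∈ XL L, (∀ y ∈ Y, y = v ∨ flipLT F rA rD y v) →
          (u = v ∨ flipLT F rA rD u v)) ∧
      (∃ u ∈ XL L, (∀ y ∈ Y, y = u ∨ flipLT F rA rD u y) ∧
        ∀ v ∈ XL L, (∀ y ∈ Y, y = v ∨ flipLT F rA rD v y) →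
          (u = v ∨ flipLT F rA rD v u))) := by
  let : TopologicalSpace A := ⊥
  have : DiscreteTopology A := ⟨rfl⟩
  have := isStrictTotalOrder_flipLT hL hoc
  have hlt (y : ℤ → A) : IsOpen {x | flipLT F rA rD x y} :=
    (isOpen_setOf_flipLT rA rD).preimage (continuous_id.prodMk continuous_const)
  have hgt (y : ℤ → A) : IsOpen {x | flipLT F rA rD y x} :=
    (isOpen_setOf_flipLT rA rD).preimage (continuous_const.prodMk continuous_id)
  refine ⟨fun x hx y hy => ?_, fun x hx => irrefl_of (fun x y : XL L => flipLT F rA rD x y) ⟨x, hx⟩,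
    fun x hx y hy z hz =>
      trans_of (fun x y : XL L => flipLT F rA rD x y) (a := ⟨x, hx⟩) (b := ⟨y, hy⟩) (c := ⟨z, hz⟩),
    fun Y hYX hY => ⟨(isCompact_XL L).exists_lub hlt hgt hYX hY,
      (isCompact_XL L).exists_glb hlt hgt hYX hY⟩⟩
  rcases trichotomous_of (fun x y : XL L => flipLT F rA rD x y) ⟨x, hx⟩ ⟨y, hy⟩ with h | h | h
  exacts [Or.inr (Or.inl h), Or.inl (congrArg Subtype.val h), Or.inr (Or.inr h)]
end

section
/- Let L be a recurrent language with no locally strong bispecial word. If w' and w are nonempty words with |w'| ≤ |w| and w'wⁿ ∈ L for all n ∈ ℕ, then w' is a suffix of w; likewise if wⁿw' ∈ L for all n, then w' is a prefix of w. -/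
open List Set

variable {A : Type*}

variable {F : Finset A}

/-! If `w'` is not a suffix of `w`, compare `w'` with the suffix of `w` of the same length: at
their last disagreement, `a :: s <:+ w'` and `b :: s <:+ w` with `a ≠ b`. Both `a s wⁿ` and `b s wⁿ`
lie in `L`, and `b s wⁿ⁺¹ t ∈ L → b s wⁿ t ∈ L`, so the sets of short right extensions of `b s wⁿ`
stabilise. Past that point, a continuation `d ≠ w[j]` of `a s wᵐ (w.take j)` would give
`s wᵐ (w.take j)` the four extensions `{a, b} × {w[j], d}`, making it locally strong bispecial. So
every right extension of `a s wᴹ` follows `w`, in particular its return word given by recurrence;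
reading that return inside `w^∞` puts `a` and `b` at the same residue modulo `|w|`, so `a = b`.
The prefix statement is the suffix statement for the reversed language. -/

def wordPow (w : List A) (n : ℕ) : List A := (replicate n w).flatten

section WordPow

variable (w : List A)

@[simp]
lemma wordPow_zero : wordPow w 0 = [] := rfl

lemma wordPow_succ (n : ℕ) : wordPow w (n + 1) = w ++ wordPow w n := by
  simp [wordPow, replicate_succ]

lemma wordPow_succ' (n : ℕ) : wordPow w (n + 1) = wordPow w n ++ w := by
  simp [wordPow, replicate_succ']

lemma wordPow_add (m n : ℕ) : wordPow w (m + n) = wordPow w m ++ wordPow w n := by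
  simp only [wordPow, replicate_add, flatten_append]

@[simp]
lemma length_wordPow (n : ℕ) : (wordPow w n).length = n * w.length := by
  simp [wordPow]

lemma reverse_wordPow (n : ℕ) : (wordPow w n).reverse = wordPow w.reverse n := by
  induction n with
  | zero => rfl
  | succ n ih => rw [wordPow_succ, reverse_append, ih, wordPow_succ']

variable {w}

lemma getElem?_wordPow {k i : ℕ} (hi : i < k * w.length) :
    (wordPow w k)[i]? = w[i % w.length]? := by
  induction k generalizing i with
  | zero => simp at hi
  | succ k ih =>
    rw [wordPow_succ]
    by_cases h : i < w.length
    · rw [getElem?_append_left h, Nat.mod_eq_of_lt h]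
    · rw [not_lt] at h
      rw [getElem?_append_right h, ih (by rw [Nat.succ_mul] at hi; omega), ← Nat.mod_eq_sub_mod h]

lemma eq_of_cons_append_infix_wordPow {v : List A} {a b : A} {n : ℕ}
    (h : a :: (v ++ [b]) <:+: wordPow w n) (hv : v.length + 1 = w.length) : a = b := by
  obtain ⟨p, q, hpq⟩ := h
  have hlen := congrArg length hpq
  simp only [length_append, length_cons, length_wordPow] at hlen
  have ha : (wordPow w n)[p.length]? = some a := by simp [← hpq]
  have hb : (wordPow w n)[p.length + w.length]? = some b := by
    rw [← hpq, append_assoc, getElem?_append_right (by omega)]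
    simp [← hv]
  rw [getElem?_wordPow (by omega)] at ha
  rw [getElem?_wordPow (by omega), Nat.add_mod_right, ha] at hb
  exact Option.some.inj hb

lemma exists_eq_wordPow_append_take_of_prefix (hw : w ≠ []) {t : List A} {k : ℕ}
    (ht : t <+: wordPow w k) : ∃ q j, j < w.length ∧ t = wordPow w q ++ w.take j := by
  induction k generalizing t with
  | zero => exact ⟨0, 0, length_pos_iff.mpr hw, by simpa using ht⟩
  | succ k ih =>
    rw [wordPow_succ] at ht
    by_cases hl : t.length < w.length
    · refine ⟨0, t.length, hl, ?_⟩
      have ht' := prefix_iff_eq_take.mp ht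
      rwa [take_append_of_le_length hl.le] at ht'
    · obtain ⟨t', rfl⟩ := prefix_of_prefix_length_le (prefix_append w _) ht (not_lt.mp hl)
      obtain ⟨q, j, hj, rfl⟩ := ih ((prefix_append_right_inj w).mp ht)
      exact ⟨q + 1, j, hj, by rw [wordPow_succ, append_assoc]⟩

lemma take_append_getElem_prefix {j : ℕ} (hj : j < w.length) : w.take j ++ [w[j]] <+: w := by
  rw [take_concat_get']
  exact take_prefix _ _

end WordPow

lemma exists_cons_suffix_of_ne {x y : List A} (hlen : x.length = y.length) (hne : x ≠ y) :
    ∃ s a b, a ≠ b ∧ a :: s <:+ x ∧ b :: s <:+ y := by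
  suffices ∀ x y : List A, x.length = y.length → x ≠ y →
      ∃ r a b, a ≠ b ∧ r ++ [a] <+: x ∧ r ++ [b] <+: y by
    obtain ⟨r, a, b, hab, ha, hb⟩ := this x.reverse y.reverse (by simpa) (by simpa)
    exact ⟨r.reverse, a, b, hab, by simpa using reverse_prefix.mp (by simpa using ha),
      by simpa using reverse_prefix.mp (by simpa using hb)⟩
  intro x
  induction x with
  | nil => intro y hlen hne; exact absurd (length_eq_zero_iff.mp hlen.symm).symm hne
  | cons c x ih =>
    rintro (_ | ⟨d, y⟩) hlen hne
    · simp at hlen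
    by_cases hcd : c = d
    · subst hcd
      obtain ⟨r, a, b, hab, ha, hb⟩ := ih y (by simpa using hlen) (by simpa using hne)
      exact ⟨c :: r, a, b, hab, by simpa using ha, by simpa using hb⟩
    · exact ⟨[], c, d, hcd, by simp, by simp⟩

lemma Finite.exists_forall_ge_iff_of_antitone {ι : Type*} [Finite ι] {P : ℕ → ι → Prop}
    (hP : ∀ m i, P (m + 1) i → P m i) : ∃ N, ∀ m, N ≤ m → ∀ i, P m i ↔ P N i := by
  obtain ⟨N, hN⟩ := WellFoundedLT.antitone_chain_condition
    (antitone_nat_of_succ_le (f := fun m => {i | P m i}) hP)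
  exact ⟨N, fun m hm i => (Set.ext_iff.mp (hN m hm) i).symm⟩

section Language

variable {L : Set (List A)}

lemma IsLanguage.mem_of_infix_s7 (hL : IsLanguage L) {x y : List A} (hy : y ∈ L) (hxy : x <:+: y) :
    x ∈ L :=
  hL.1 y hy x hxy

lemma IsLanguage.preimage_reverse (hL : IsLanguage L) : IsLanguage (reverse ⁻¹' L) := by
  refine ⟨fun x hx v hv => hL.1 _ hx _ (reverse_infix.mpr hv), fun x hx => ?_, fun x hx => ?_⟩
  · obtain ⟨c, hc⟩ := hL.2.2 _ hx
    exact ⟨c, by simpa using hc⟩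
  · obtain ⟨c, hc⟩ := hL.2.1 _ hx
    exact ⟨c, by simpa using hc⟩

lemma LangRecurrent.preimage_reverse (hrec : LangRecurrent L) :
    LangRecurrent (reverse ⁻¹' L) := by
  intro v hv
  obtain ⟨u, hu, huL, ⟨p, hp⟩⟩ := hrec v.reverse hv
  have hp' : (v ++ p.reverse).reverse = v.reverse ++ u := by simpa using hp
  refine ⟨p.reverse, ?_, by simpa [Set.mem_preimage, hp'] using huL,
    reverse_prefix.mp (hp' ▸ prefix_append _ _)⟩
  rintro h
  simp only [reverse_eq_nil_iff] at h
  subst h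
  exact hu (by simpa using hp)

lemma LocallyStrongBispecial.of_preimage_reverse {v : List A}
    (h : LocallyStrongBispecial (reverse ⁻¹' L) v) : LocallyStrongBispecial L v.reverse := by
  obtain ⟨⟨hA, hD⟩, A', D', hA', hD', hA'sub, hD'sub, hcard⟩ := h
  have harr : arrSet (reverse ⁻¹' L) v = depSet L v.reverse := by ext; simp [arrSet, depSet]
  have hdep : depSet (reverse ⁻¹' L) v = arrSet L v.reverse := by ext; simp [arrSet, depSet]
  have hswap : {p : A × A | p.1 ∈ D' ∧ p.2 ∈ A' ∧ p.1 :: (v.reverse ++ [p.2]) ∈ L} =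
      Prod.swap ⁻¹' {p : A × A | p.1 ∈ A' ∧ p.2 ∈ D' ∧ p.1 :: (v ++ [p.2]) ∈ reverse ⁻¹' L} := by
    ext; simp [and_left_comm]
  rw [harr] at hA hA'sub
  rw [hdep] at hD hD'sub
  refine ⟨⟨hD, hA⟩, D', A', hD', hA', hD'sub, hA'sub, ?_⟩
  rw [hswap, ← Set.image_swap_eq_preimage_swap, Set.ncard_image_of_injective _ Prod.swap_injective]
  omega

lemma locallyStrongBispecial_of_four_extensions [Finite A] (hL : IsLanguage L) {W : List A}
    {a b c d : A} (hab : a ≠ b) (hcd : c ≠ d)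
    (hac : a :: (W ++ [c]) ∈ L) (had : a :: (W ++ [d]) ∈ L)
    (hbc : b :: (W ++ [c]) ∈ L) (hbd : b :: (W ++ [d]) ∈ L) : LocallyStrongBispecial L W := by
  have harr : {a, b} ⊆ arrSet L W := by
    rintro x (rfl | rfl)
    · exact hL.mem_of_infix_s7 hac (prefix_cons_inj x |>.mpr (prefix_append W _)).isInfix
    · exact hL.mem_of_infix_s7 hbc (prefix_cons_inj x |>.mpr (prefix_append W _)).isInfix
  have hdep : {c, d} ⊆ depSet L W := by
    rintro x (rfl | rfl)
    · exact hL.mem_of_infix_s7 hac (suffix_cons a _).isInfix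
    · exact hL.mem_of_infix_s7 had (suffix_cons a _).isInfix
  have hpairs : {a, b} ×ˢ {c, d} ⊆ {p : A × A | p.1 ∈ ({a, b} : Set A) ∧
      p.2 ∈ ({c, d} : Set A) ∧ p.1 :: (W ++ [p.2]) ∈ L} := by
    rintro ⟨x, y⟩ ⟨hx, hy⟩
    refine ⟨hx, hy, ?_⟩
    rcases hx with rfl | rfl <;> rcases hy with rfl | rfl <;> assumption
  have hA := Set.ncard_le_ncard harr
  have hD := Set.ncard_le_ncard hdep
  have hP := Set.ncard_le_ncard hpairs
  rw [Set.ncard_pair hab] at hA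
  rw [Set.ncard_pair hcd] at hD
  rw [Set.ncard_prod, Set.ncard_pair hab, Set.ncard_pair hcd] at hP
  refine ⟨⟨by omega, by omega⟩, {a, b}, {c, d}, by simp, by simp, harr, hdep, ?_⟩
  rw [Set.ncard_pair hab, Set.ncard_pair hcd]
  omega

section Suffix

variable {w s : List A} {a b : A}

lemma cons_append_wordPow_suffix (hb : b :: s <:+ w) (c : A) (m : ℕ) (t : List A) :
    b :: (s ++ wordPow w m ++ t) <:+ c :: (s ++ wordPow w (m + 1) ++ t) := by
  obtain ⟨e, rfl⟩ := hb
  exact ⟨c :: (s ++ e), by simp [wordPow_succ]⟩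

lemma exists_forall_ge_extension_eq_getElem [Finite A] (hL : IsLanguage L)
    (hns : ∀ v, ¬ LocallyStrongBispecial L v) (hab : a ≠ b)
    (ha : ∀ n, a :: (s ++ wordPow w n) ∈ L) (hb : b :: s <:+ w) :
    ∃ M, ∀ m, M ≤ m → ∀ j (hj : j < w.length) d,
      a :: (s ++ wordPow w m ++ (w.take j ++ [d])) ∈ L → d = w[j] := by
  have hbL (n : ℕ) : b :: (s ++ wordPow w n) ∈ L := by
    have h := cons_append_wordPow_suffix hb a n []
    rw [append_nil, append_nil] at h
    exact hL.mem_of_infix_s7 (ha (n + 1)) h.isInfix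
  obtain ⟨N, hN⟩ := Finite.exists_forall_ge_iff_of_antitone
    (P := fun m (i : Fin w.length × A) => b :: (s ++ wordPow w m ++ (w.take i.1 ++ [i.2])) ∈ L)
    fun m i h => hL.mem_of_infix_s7 h (cons_append_wordPow_suffix hb b m _).isInfix
  refine ⟨N + 1, fun m hm j hj d had => ?_⟩
  by_contra hd
  obtain ⟨m, rfl⟩ := Nat.exists_eq_add_of_le' (by omega : 1 ≤ m)
  have hbd : b :: (s ++ wordPow w (m + 1) ++ (w.take j ++ [d])) ∈ L :=
    (hN (m + 1) (by omega) (⟨j, hj⟩, d)).mpr ((hN m (by omega) (⟨j, hj⟩, d)).mp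
      (hL.mem_of_infix_s7 had (cons_append_wordPow_suffix hb a m _).isInfix))
  have hstep (c : A) : c :: (s ++ wordPow w (m + 1) ++ (w.take j ++ [w[j]])) <:+:
      c :: (s ++ wordPow w (m + 2)) := by
    refine IsPrefix.isInfix ?_
    rw [wordPow_succ' w (m + 1), prefix_cons_inj, append_assoc]
    exact (prefix_append_right_inj _).mpr ((prefix_append_right_inj _).mpr
      (take_append_getElem_prefix hj))
  exact hns _ (locallyStrongBispecial_of_four_extensions (W := s ++ wordPow w (m + 1) ++ w.take j)
    hL hab (Ne.symm hd)
    (by simpa only [append_assoc] using hL.mem_of_infix_s7 (ha (m + 2)) (hstep a))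
    (by simpa only [append_assoc] using had)
    (by simpa only [append_assoc] using hL.mem_of_infix_s7 (hbL (m + 2)) (hstep b))
    (by simpa only [append_assoc] using hbd))

lemma exists_prefix_wordPow_of_extension_eq_getElem (hL : IsLanguage L) (hw : w ≠ [])
    {u : List A} (hforced : ∀ q j (hj : j < w.length) d,
      u ++ wordPow w q ++ w.take j ++ [d] ∈ L → d = w[j]) :
    ∀ t, u ++ t ∈ L → ∃ K, t <+: wordPow w K := by
  intro t
  induction t using reverseRecOn with
  | nil => exact fun _ => ⟨0, prefix_rfl⟩
  | append_singleton t d ih =>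
    intro htd
    obtain ⟨K, hK⟩ := ih (hL.mem_of_infix_s7 htd (by simpa using (prefix_append (u ++ t) [d]).isInfix))
    obtain ⟨q, j, hj, rfl⟩ := exists_eq_wordPow_append_take_of_prefix hw hK
    obtain rfl := hforced q j hj d (by simpa using htd)
    refine ⟨q + 1, ?_⟩
    rw [wordPow_succ', append_assoc]
    exact (prefix_append_right_inj _).mpr (take_append_getElem_prefix hj)

lemma eq_of_suffix_append_of_prefix_wordPow {M K : ℕ} {u : List A} (hb : b :: s <:+ w) (hM : 1 ≤ M)
    (hu : u ≠ []) (huK : u <+: wordPow w K)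
    (hret : a :: (s ++ wordPow w M) <:+ a :: (s ++ wordPow w M) ++ u) : a = b := by
  obtain ⟨e, rfl⟩ := hb
  have hshift : a :: (s ++ wordPow (e ++ b :: s) M) <:+ s ++ wordPow (e ++ b :: s) M ++ u := by
    rcases suffix_cons_iff.mp hret with h | h
    · exact absurd (by simpa using h) hu
    · exact h
  have hper : s ++ wordPow (e ++ b :: s) M ++ u <:+: wordPow (e ++ b :: s) (1 + M + K) := by
    obtain ⟨r, hr⟩ := huK
    exact ⟨e ++ [b], r, by simp [wordPow_add, wordPow_succ, ← hr]⟩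
  have hperiod : a :: (s ++ e ++ [b]) <+: a :: (s ++ wordPow (e ++ b :: s) M) := by
    obtain ⟨M, rfl⟩ := Nat.exists_eq_add_of_le' hM
    exact ⟨s ++ wordPow (e ++ b :: s) M, by simp [wordPow_succ]⟩
  exact eq_of_cons_append_infix_wordPow
    (hperiod.isInfix.trans (hshift.isInfix.trans hper)) (by simp; omega)

theorem suffix_of_forall_append_wordPow_mem [Finite A] (hL : IsLanguage L)
    (hrec : LangRecurrent L) (hns : ∀ v, ¬ LocallyStrongBispecial L v) {w w' : List A}
    (hlen : w'.length ≤ w.length) (H : ∀ n, w' ++ wordPow w n ∈ L) : w' <:+ w := by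
  by_contra hcon
  obtain ⟨s, a, b, hab, has, hbs⟩ := exists_cons_suffix_of_ne (x := w')
    (y := w.drop (w.length - w'.length)) (by simp; omega) (fun h => hcon (h ▸ drop_suffix _ _))
  have hb : b :: s <:+ w := hbs.trans (drop_suffix _ _)
  have ha : ∀ n, a :: (s ++ wordPow w n) ∈ L := fun n => by
    obtain ⟨p, rfl⟩ := has
    exact hL.mem_of_infix_s7 (H n) ⟨p, [], by simp⟩
  obtain ⟨M, hM⟩ := exists_forall_ge_extension_eq_getElem hL hns hab ha hb
  obtain ⟨u, hu, huL, hret⟩ := hrec _ (ha (M + 1))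
  obtain ⟨K, huK⟩ := exists_prefix_wordPow_of_extension_eq_getElem hL (hb.ne_nil (by simp))
    (fun q j hj d h => hM (M + 1 + q) (by omega) j hj d (by simpa [wordPow_add] using h)) u huL
  exact hab (eq_of_suffix_append_of_prefix_wordPow hb (by omega) hu huK hret)

end Suffix

theorem prefix_of_forall_wordPow_append_mem [Finite A] (hL : IsLanguage L)
    (hrec : LangRecurrent L) (hns : ∀ v, ¬ LocallyStrongBispecial L v) {w w' : List A}
    (hlen : w'.length ≤ w.length) (H : ∀ n, wordPow w n ++ w' ∈ L) : w' <+: w :=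
  reverse_suffix.mp <| suffix_of_forall_append_wordPow_mem hL.preimage_reverse
    hrec.preimage_reverse (fun v h => hns _ h.of_preimage_reverse) (by simpa using hlen)
    fun n => by simpa [reverse_wordPow] using H n

end Language

theorem stmt7_general [Fintype A] (L : Set (List A)) (hL : IsLanguage L)
    (hrec : LangRecurrent L)
    (hns : ∀ w : List A, ¬ LocallyStrongBispecial L w)
    (w w' : List A) (hlen : w'.length ≤ w.length) :
    ((∀ n : ℕ, w' ++ (List.replicate n w).flatten ∈ L) → w' <:+ w) ∧
    ((∀ n : ℕ, (List.replicate n w).flatten ++ w' ∈ L) → w' <+: w) :=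
  ⟨suffix_of_forall_append_wordPow_mem hL hrec hns hlen,
    prefix_of_forall_wordPow_append_mem hL hrec hns hlen⟩

/-- in a recurrent language with no locally strong bispecial word,
if `w'wⁿ ∈ L` for all `n` (with `|w'| ≤ |w|`) then `w'` is a suffix of `w`, and
if `wⁿw' ∈ L` for all `n` then `w'` is a prefix of `w`. -/
theorem stmt7 [Fintype A] (L : Set (List A)) (hL : IsLanguage L)
    (hrec : LangRecurrent L)
    (hns : ∀ w : List A, ¬ LocallyStrongBispecial L w)
    (w w' : List A) (hw : w ≠ []) (hw' : w' ≠ []) (hlen : w'.length ≤ w.length) :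
    ((∀ n : ℕ, w' ++ (List.replicate n w).flatten ∈ L) → w' <:+ w) ∧
    ((∀ n : ℕ, (List.replicate n w).flatten ++ w' ∈ L) → w' <+: w) :=
  stmt7_general L hL hrec hns w w' hlen
end
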